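/- arXiv:1512.03198 — 8 statements merged into one kernel-verified Lean document; each statement's English description precedes it below -/
import Mathlib

section
/- Let m, k ∈ ℕ with m ≥ 2 and 1 ≤ k ≤ m−1. Let I be a positive nondecreasing function on (0,1) with ∫_0^1 ds/I(s) < ∞, and set ψ_I(t) = (∫_0^t dr/I(r))^m for t ∈ (0,1). Then there exists a constant C, depending only on m, such that for every nonincreasing function g : (0,1) → [0,∞) satisfying g(t) ≤ 1/ψ_I(t) for all t ∈ (0,1), one has H_I^k g(t) ≤ C · g(t)^{1−k/m} for all t ∈ (0,1). -/
open MeasureTheory ENNReal NNReal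

/-- The Hardy-type operator `H_I g (t) = ∫_t^1 g(r)/I(r) dr`, acting on nonnegative
measurable functions on `(0,1)`, realized as `[0,∞]`-valued functions on `ℝ`. -/
noncomputable def HI (I : ℝ → ℝ) (g : ℝ → ℝ≥0∞) : ℝ → ℝ≥0∞ :=
  fun t => ∫⁻ r in Set.Ioo t 1, g r / ENNReal.ofReal (I r)

/-- A rearrangement-invariant function norm on `(0,1)`. -/
structure RINorm where
  N : (ℝ → ℝ≥0∞) → ℝ≥0∞
  eq_zero_iff : ∀ f : ℝ → ℝ≥0∞, Measurable f →
    (N f = 0 ↔ ∀ᵐ t ∂(volume.restrict (Set.Ioo (0:ℝ) 1)), f t = 0)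
  smul_eq : ∀ f : ℝ → ℝ≥0∞, Measurable f → ∀ c : ℝ≥0,
    N (fun t => (c : ℝ≥0∞) * f t) = (c : ℝ≥0∞) * N f
  add_le : ∀ f g : ℝ → ℝ≥0∞, Measurable f → Measurable g →
    N (fun t => f t + g t) ≤ N f + N g
  mono : ∀ f g : ℝ → ℝ≥0∞, Measurable f → Measurable g →
    (∀ᵐ t ∂(volume.restrict (Set.Ioo (0:ℝ) 1)), f t ≤ g t) → N f ≤ N g
  fatou : ∀ (f : ℕ → ℝ → ℝ≥0∞) (g : ℝ → ℝ≥0∞),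
    (∀ j, Measurable (f j)) → Measurable g →
    (∀ j t, f j t ≤ f (j + 1) t) →
    (∀ᵐ t ∂(volume.restrict (Set.Ioo (0:ℝ) 1)), (⨆ j, f j t) = g t) →
    (⨆ j, N (f j)) = N g
  chi_lt_top : N ((Set.Ioo (0:ℝ) 1).indicator fun _ => 1) < ⊤
  lintegral_le : ∃ c : ℝ≥0, 0 < c ∧ ∀ f : ℝ → ℝ≥0∞, Measurable f →
    (∫⁻ t in Set.Ioo (0:ℝ) 1, f t) ≤ (c : ℝ≥0∞) * N f
  equimeasurable : ∀ f g : ℝ → ℝ≥0∞, Measurable f → Measurable g →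
    (∀ lam : ℝ≥0∞, 0 < lam →
      volume {t ∈ Set.Ioo (0:ℝ) 1 | lam < f t}
        = volume {t ∈ Set.Ioo (0:ℝ) 1 | lam < g t}) →
    N f = N g

/-! Let `ν` be the measure with density `1/I` on `(0,1)`, so that `ψ_I(t) = ν (Iic t) ^ m`.
Writing `g = u⁻ᵐ`, the hypothesis says `ν (Iic t) ≤ u t`, and one shows
`H_I^k g ≤ 5^k u^{k-m}` by induction on `k`. In the inductive step, `u r ≥ max (u t) (ν (Iic r))`
for `r > t`, so it suffices to bound `∫ max B (ν (Iic r)) ^ (-α) dν(r)` by `5 B^{1-α}` for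
`α ≥ 2`. For this, split the line into the set where `ν (Iic r) ≤ B` and the dyadic shells
`2^j B < ν (Iic r) ≤ 2^{j+1} B`; each of these sets `S` satisfies `ν S ≤ sup_{r ∈ S} ν (Iic r)`,
and the resulting series is geometric. -/

open Set

theorem ENNReal.exists_two_pow_mul_lt_le {B x : ℝ≥0∞} (hB : B ≠ 0) (hx : x ≠ ⊤) (hBx : B < x) :
    ∃ j : ℕ, 2 ^ j * B < x ∧ x ≤ 2 ^ (j + 1) * B := by
  classical
  have hex : ∃ n : ℕ, x ≤ 2 ^ (n + 1) * B := by
    obtain ⟨n, hn⟩ := ENNReal.exists_nat_mul_gt hB hx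
    refine ⟨n, hn.le.trans (mul_le_mul_left ?_ B)⟩
    exact_mod_cast (Nat.lt_two_pow_self.trans (Nat.pow_lt_pow_succ (by norm_num))).le
  refine ⟨Nat.find hex, ?_, Nat.find_spec hex⟩
  rcases Nat.eq_zero_or_eq_succ_pred (Nat.find hex) with h0 | hsucc
  · simpa [h0] using hBx
  · rw [hsucc]
    exact not_le.1 (Nat.find_min hex (Nat.pred_lt_self (by omega)))

theorem ENNReal.mul_inv_rpow_eq_inv_rpow_sub_one {x : ℝ≥0∞} (hx0 : x ≠ 0) (hxt : x ≠ ⊤)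
    (α : ℝ) : x * (x ^ α)⁻¹ = (x ^ (α - 1))⁻¹ := by
  rw [← ENNReal.rpow_neg, ← ENNReal.rpow_neg, neg_sub, sub_eq_add_neg,
    ENNReal.rpow_add _ _ hx0 hxt, ENNReal.rpow_one]

theorem ENNReal.inv_two_pow_mul_rpow_le {B : ℝ≥0∞} (hB : B ≠ ⊤) {β : ℝ} (hβ : 1 ≤ β) (j : ℕ) :
    ((2 ^ j * B) ^ β)⁻¹ ≤ 2⁻¹ ^ j * (B ^ β)⁻¹ := by
  rw [← ENNReal.rpow_neg, ← ENNReal.rpow_neg, ENNReal.mul_rpow_of_ne_top (by simp) hB,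
    ← ENNReal.rpow_natCast, ← ENNReal.rpow_mul, ← ENNReal.inv_pow, ← ENNReal.rpow_natCast,
    ← ENNReal.rpow_neg_one, ← ENNReal.rpow_mul]
  gcongr
  norm_num

theorem measurable_measure_Iic (ν : Measure ℝ) : Measurable fun r => ν (Iic r) :=
  Monotone.measurable fun _ _ hab => measure_mono (Iic_subset_Iic.2 hab)

section FiniteMeasure

variable (ν : Measure ℝ) [IsFiniteMeasure ν]

/-- By inner regularity it suffices to treat compact `K ⊆ E`, and `K ⊆ Iic (sSup K)` with
`sSup K ∈ E`. -/
theorem measure_le_of_forall_measure_Iic_le {E : Set ℝ} (hE : MeasurableSet E) {D : ℝ≥0∞}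
    (h : ∀ r ∈ E, ν (Iic r) ≤ D) : ν E ≤ D := by
  rw [hE.measure_eq_iSup_isCompact]
  refine iSup₂_le fun K hKE => iSup_le fun hK => ?_
  rcases K.eq_empty_or_nonempty with rfl | hne
  · simp
  calc ν K ≤ ν (Iic (sSup K)) := measure_mono fun x hx => le_csSup hK.bddAbove hx
    _ ≤ D := h _ (hKE (hK.sSup_mem hne))

theorem setLIntegral_le_mul_of_forall_measure_Iic_le {S : Set ℝ} (hS : MeasurableSet S)
    {h : ℝ → ℝ≥0∞} {c y : ℝ≥0∞} (hle : ∀ r ∈ S, h r ≤ c ∧ ν (Iic r) ≤ y) :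
    ∫⁻ r in S, h r ∂ν ≤ c * y :=
  calc ∫⁻ r in S, h r ∂ν ≤ ∫⁻ _ in S, c ∂ν := setLIntegral_mono' hS fun r hr => (hle r hr).1
    _ = c * ν S := setLIntegral_const S c
    _ ≤ c * y := by
      gcongr
      exact measure_le_of_forall_measure_Iic_le ν hS fun r hr => (hle r hr).2

theorem lintegral_inv_max_measure_Iic_rpow_le {α : ℝ} (hα : 2 ≤ α) (B : ℝ≥0∞) :
    ∫⁻ r, (max B (ν (Iic r)) ^ α)⁻¹ ∂ν ≤ 5 * (B ^ (α - 1))⁻¹ := by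
  rcases eq_or_ne B 0 with rfl | hB0
  · simp [ENNReal.zero_rpow_of_pos (by linarith : 0 < α - 1)]
  rcases eq_or_ne B ⊤ with rfl | hBt
  · simp [ENNReal.top_rpow_of_pos (by linarith : 0 < α)]
  set φ : ℝ → ℝ≥0∞ := fun r => ν (Iic r)
  set E : Set ℝ := {r | φ r ≤ B}
  set F : ℕ → Set ℝ := fun j => {r | 2 ^ j * B < φ r ∧ φ r ≤ 2 ^ (j + 1) * B}
  have hcover : univ ⊆ E ∪ ⋃ j, F j := by
    intro r _
    rcases le_or_gt (φ r) B with h | h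
    · exact Or.inl h
    · exact Or.inr (mem_iUnion.2 (ENNReal.exists_two_pow_mul_lt_le hB0 (measure_ne_top _ _) h))
  have hE : ∫⁻ r in E, (max B (φ r) ^ α)⁻¹ ∂ν ≤ (B ^ (α - 1))⁻¹ := by
    rw [← ENNReal.mul_inv_rpow_eq_inv_rpow_sub_one hB0 hBt, mul_comm]
    refine setLIntegral_le_mul_of_forall_measure_Iic_le ν
      (measurableSet_le (measurable_measure_Iic ν) measurable_const) fun r hr => ⟨?_, hr⟩
    gcongr
    exact le_max_left _ _
  have hF : ∀ j, ∫⁻ r in F j, (max B (φ r) ^ α)⁻¹ ∂ν ≤ 2 * (2⁻¹ ^ j * (B ^ (α - 1))⁻¹) := by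
    intro j
    have hFj : MeasurableSet (F j) :=
      (measurableSet_lt measurable_const (measurable_measure_Iic ν)).inter
        (measurableSet_le (measurable_measure_Iic ν) measurable_const)
    have hx0 : (2 : ℝ≥0∞) ^ j * B ≠ 0 := mul_ne_zero (by simp) hB0
    have hxt : (2 : ℝ≥0∞) ^ j * B ≠ ⊤ := mul_ne_top (by simp) hBt
    refine (setLIntegral_le_mul_of_forall_measure_Iic_le ν hFj
      (c := ((2 ^ j * B) ^ α)⁻¹) (y := 2 * (2 ^ j * B)) fun r hr => ⟨?_, ?_⟩).trans ?_
    · gcongr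
      exact hr.1.le.trans (le_max_right _ _)
    · exact hr.2.trans_eq (by ring)
    · rw [mul_left_comm, mul_comm _ (_ ^ j * B), ENNReal.mul_inv_rpow_eq_inv_rpow_sub_one hx0 hxt]
      gcongr
      exact ENNReal.inv_two_pow_mul_rpow_le hBt (by linarith) j
  calc ∫⁻ r, (max B (φ r) ^ α)⁻¹ ∂ν
      ≤ ∫⁻ r in E ∪ ⋃ j, F j, (max B (φ r) ^ α)⁻¹ ∂ν := by
        rw [← setLIntegral_univ]; exact lintegral_mono_set hcover
    _ ≤ ∫⁻ r in E, (max B (φ r) ^ α)⁻¹ ∂ν + ∑' j, ∫⁻ r in F j, (max B (φ r) ^ α)⁻¹ ∂ν := by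
        refine (lintegral_union_le _ _ _).trans ?_
        gcongr
        exact lintegral_iUnion_le _ _
    _ ≤ (B ^ (α - 1))⁻¹ + ∑' j : ℕ, 2 * (2⁻¹ ^ j * (B ^ (α - 1))⁻¹) :=
        add_le_add hE (ENNReal.tsum_le_tsum hF)
    _ = 5 * (B ^ (α - 1))⁻¹ := by
        rw [ENNReal.tsum_mul_left, ENNReal.tsum_mul_right, ENNReal.tsum_geometric,
          ENNReal.one_sub_inv_two, inv_inv, ← mul_assoc, ← one_add_mul]
        norm_num

end FiniteMeasure

theorem withDensity_restrict_Ioo_apply_Iic (f : ℝ → ℝ≥0∞) {a b r : ℝ} (hrb : r < b) :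
    (volume.restrict (Ioo a b)).withDensity f (Iic r) = ∫⁻ s in Ioo a r, f s := by
  rw [withDensity_apply _ measurableSet_Iic, Measure.restrict_restrict measurableSet_Iic,
    setLIntegral_congr Ioo_ae_eq_Ioc]
  congr 2
  ext s
  simp only [mem_inter_iff, mem_Iic, mem_Ioo, mem_Ioc]
  exact ⟨fun h => ⟨h.2.1, h.1⟩, fun h => ⟨h.2, h.1, h.2.trans_lt hrb⟩⟩

theorem iterate_HI_inv_rpow_le {I : ℝ → ℝ}
    (hf : AEMeasurable (fun s => (ENNReal.ofReal (I s))⁻¹) (volume.restrict (Ioo 0 1)))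
    (hfin : ∫⁻ s in Ioo 0 1, (ENNReal.ofReal (I s))⁻¹ ≠ ⊤)
    {p : ℝ} {u : ℝ → ℝ≥0∞} (hu : MonotoneOn u (Ioo 0 1))
    (hψu : ∀ t ∈ Ioo (0:ℝ) 1, ∫⁻ s in Ioo 0 t, (ENNReal.ofReal (I s))⁻¹ ≤ u t)
    (k : ℕ) (hk : (k : ℝ) + 1 ≤ p) {t : ℝ} (ht : t ∈ Ioo (0:ℝ) 1) :
    (HI I)^[k] (fun r => (u r ^ p)⁻¹) t ≤ 5 ^ k * (u t ^ (p - k))⁻¹ := by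
  set f : ℝ → ℝ≥0∞ := fun s => (ENNReal.ofReal (I s))⁻¹
  set ν := (volume.restrict (Ioo 0 1)).withDensity f
  have : IsFiniteMeasure ν := isFiniteMeasure_withDensity hfin
  have hνu : ∀ r ∈ Ioo (0:ℝ) 1, ν (Iic r) ≤ u r := fun r hr =>
    (withDensity_restrict_Ioo_apply_Iic f hr.2).trans_le (hψu r hr)
  induction k generalizing t with
  | zero => simp
  | succ k ih =>
    push_cast at hk ⊢
    set G : ℝ → ℝ≥0∞ := fun r => 5 ^ k * (max (u t) (ν (Iic r)) ^ (p - k))⁻¹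
    have hG : Measurable G :=
      ((measurable_const.max (measurable_measure_Iic ν)).pow_const _).inv.const_mul _
    calc (HI I)^[k + 1] (fun r => (u r ^ p)⁻¹) t
        = ∫⁻ r in Ioo t 1, (HI I)^[k] (fun r => (u r ^ p)⁻¹) r / ENNReal.ofReal (I r) := by
          rw [Function.iterate_succ_apply']; rfl
      _ ≤ ∫⁻ r in Ioo t 1, f r * G r := by
          refine setLIntegral_mono' measurableSet_Ioo fun r hr => ?_
          have hr01 : r ∈ Ioo (0:ℝ) 1 := ⟨ht.1.trans hr.1, hr.2⟩
          rw [div_eq_mul_inv, mul_comm]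
          refine mul_le_mul_right ((ih (by linarith) hr01).trans ?_) _
          dsimp only [G]
          gcongr
          · linarith
          · exact max_le (hu ht hr01 hr.1.le) (hνu r hr01)
      _ ≤ ∫⁻ r in Ioo 0 1, f r * G r := lintegral_mono_set (Ioo_subset_Ioo_left ht.1.le)
      _ = 5 ^ k * ∫⁻ r, (max (u t) (ν (Iic r)) ^ (p - k))⁻¹ ∂ν := by
          rw [← lintegral_const_mul' _ _ (by simp)]
          exact (lintegral_withDensity_eq_lintegral_mul₀ hf hG.aemeasurable).symm
      _ ≤ 5 ^ k * (5 * (u t ^ (p - k - 1))⁻¹) := by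
          gcongr
          exact lintegral_inv_max_measure_Iic_rpow_le ν (by linarith) (u t)
      _ = 5 ^ (k + 1) * (u t ^ (p - (k + 1)))⁻¹ := by
          rw [sub_sub, ← mul_assoc, pow_succ]

theorem iterate_HI_le_rpow {I : ℝ → ℝ}
    (hf : AEMeasurable (fun s => (ENNReal.ofReal (I s))⁻¹) (volume.restrict (Ioo 0 1)))
    (hfin : ∫⁻ s in Ioo 0 1, (ENNReal.ofReal (I s))⁻¹ ≠ ⊤)
    {m : ℕ} {g : ℝ → ℝ≥0∞} (hg : AntitoneOn g (Ioo 0 1))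
    (hgψ : ∀ t ∈ Ioo (0:ℝ) 1, g t ≤ ((∫⁻ r in Ioo 0 t, (ENNReal.ofReal (I r))⁻¹) ^ m)⁻¹)
    {k : ℕ} (hk : k < m) {t : ℝ} (ht : t ∈ Ioo (0:ℝ) 1) :
    (HI I)^[k] g t ≤ 5 ^ k * g t ^ (1 - (k : ℝ) / m) := by
  have hm : (m : ℝ) ≠ 0 := Nat.cast_ne_zero.2 (by omega)
  set u : ℝ → ℝ≥0∞ := fun r => (g r ^ (m : ℝ)⁻¹)⁻¹
  have hgu : g = fun r => (u r ^ (m : ℝ))⁻¹ := by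
    funext r
    rw [ENNReal.inv_rpow, inv_inv, ← ENNReal.rpow_mul, inv_mul_cancel₀ hm, ENNReal.rpow_one]
  have hu : MonotoneOn u (Ioo 0 1) := fun a ha b hb hab =>
    ENNReal.inv_le_inv.2 (ENNReal.rpow_le_rpow (hg ha hb hab) (by positivity))
  have hψu : ∀ r ∈ Ioo (0:ℝ) 1, ∫⁻ s in Ioo 0 r, (ENNReal.ofReal (I s))⁻¹ ≤ u r := by
    intro r hr
    rw [ENNReal.le_inv_iff_le_inv]
    calc g r ^ (m : ℝ)⁻¹
        ≤ ((∫⁻ s in Ioo 0 r, (ENNReal.ofReal (I s))⁻¹) ^ m)⁻¹ ^ (m : ℝ)⁻¹ := by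
          gcongr; exact hgψ r hr
      _ = (∫⁻ s in Ioo 0 r, (ENNReal.ofReal (I s))⁻¹)⁻¹ := by
          rw [ENNReal.inv_rpow, ← ENNReal.rpow_natCast, ← ENNReal.rpow_mul,
            mul_inv_cancel₀ hm, ENNReal.rpow_one]
  have hk' : (k : ℝ) + 1 ≤ m := by exact_mod_cast hk
  calc (HI I)^[k] g t ≤ 5 ^ k * (u t ^ ((m : ℝ) - k))⁻¹ := by
        rw [hgu]; exact iterate_HI_inv_rpow_le hf hfin hu hψu k hk' ht
    _ = 5 ^ k * g t ^ (1 - (k : ℝ) / m) := by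
        rw [ENNReal.inv_rpow, inv_inv, ← ENNReal.rpow_mul]
        congr 2
        field_simp

theorem pointwise_estimate_for_hardy_operator_general (m : ℕ) :
    ∃ C : ℝ≥0, 0 < C ∧
      ∀ k : ℕ, 1 ≤ k → k ≤ m - 1 →
        ∀ I : ℝ → ℝ, (∀ t ∈ Set.Ioo (0:ℝ) 1, 0 < I t) →
          MonotoneOn I (Set.Ioo (0:ℝ) 1) →
          (∫⁻ s in Set.Ioo (0:ℝ) 1, (ENNReal.ofReal (I s))⁻¹) < ⊤ →
          ∀ g : ℝ → ℝ≥0∞, AntitoneOn g (Set.Ioo (0:ℝ) 1) →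
            (∀ t ∈ Set.Ioo (0:ℝ) 1,
              g t ≤ ((∫⁻ r in Set.Ioo (0:ℝ) t, (ENNReal.ofReal (I r))⁻¹) ^ m)⁻¹) →
            ∀ t ∈ Set.Ioo (0:ℝ) 1,
              (HI I)^[k] g t ≤ (C : ℝ≥0∞) * g t ^ (1 - (k : ℝ) / (m : ℝ)) := by
  refine ⟨5 ^ m, by positivity, ?_⟩
  intro k hk1 hkm I _ hI hfin g hg hgψ t ht
  have hf : AEMeasurable (fun s => (ENNReal.ofReal (I s))⁻¹) (volume.restrict (Ioo 0 1)) :=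
    ENNReal.measurable_ofReal.inv.comp_aemeasurable
      (aemeasurable_restrict_of_monotoneOn measurableSet_Ioo hI)
  calc (HI I)^[k] g t ≤ 5 ^ k * g t ^ (1 - (k : ℝ) / m) :=
        iterate_HI_le_rpow hf hfin.ne hg hgψ (by omega) ht
    _ ≤ ((5 ^ m : ℝ≥0) : ℝ≥0∞) * g t ^ (1 - (k : ℝ) / m) := by
        push_cast
        gcongr
        · norm_num
        · omega

/-- pointwise estimate for iterates of the Hardy-type operator `H_I`
on nonincreasing functions dominated by `1/ψ_I`. The constant depends only on `m`. -/
theorem pointwise_estimate_for_hardy_operator (m : ℕ) (hm : 2 ≤ m) :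
    ∃ C : ℝ≥0, 0 < C ∧
      ∀ k : ℕ, 1 ≤ k → k ≤ m - 1 →
        ∀ I : ℝ → ℝ, (∀ t ∈ Set.Ioo (0:ℝ) 1, 0 < I t) →
          MonotoneOn I (Set.Ioo (0:ℝ) 1) →
          (∫⁻ s in Set.Ioo (0:ℝ) 1, (ENNReal.ofReal (I s))⁻¹) < ⊤ →
          ∀ g : ℝ → ℝ≥0∞, AntitoneOn g (Set.Ioo (0:ℝ) 1) →
            (∀ t ∈ Set.Ioo (0:ℝ) 1,
              g t ≤ ((∫⁻ r in Set.Ioo (0:ℝ) t, (ENNReal.ofReal (I r))⁻¹) ^ m)⁻¹) →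
            ∀ t ∈ Set.Ioo (0:ℝ) 1,
              (HI I)^[k] g t ≤ (C : ℝ≥0∞) * g t ^ (1 - (k : ℝ) / (m : ℝ)) :=
  pointwise_estimate_for_hardy_operator_general m
end

section
/- Let m, k ∈ ℕ with m ≥ 2 and 1 ≤ k ≤ m−1, let I be a positive nondecreasing function on (0,1), and let N be a rearrangement-invariant function norm on (0,1). If there exists a constant C > 0 such that N((H_I^k f) · (H_I^{m−k} g)) ≤ C · N(f) · N(g) for all nonnegative measurable functions f, g on (0,1), then there exists a constant C' > 0 such that (∫_0^t ds/I(s))^m ≤ C' · N(χ_{(0,t)}) for every t ∈ (0,1). -/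
/-!
Let `μ` be the measure `ds / I(s)` on `(0,1)`, fix `t` and put `V(r) = μ(r,t)`. As `μ` has no
atoms, `V(a)^(p+1) ≲ (p+1)^2 ∫_a^t V^p dμ ≤ (p+1)^2 H_I(V^p)(a)`, so the test functions
`f_q = V^q χ_(0,t)` satisfy `f_(q+i) ≲ (q+i)^(2i) H_I^i f_q`, and the bilinear estimate gives
`N(f_(q+q'+m)) ≤ (q+q'+m)^(2m) C N(f_q) N(f_q')`. Along `q = m(2^i - 1)` this is a squaring
recursion with only polynomial losses, whence `N(f_q) ≤ G^(2^i)` with `G ≍ N(χ_(0,t))`. Since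
`N(f_q) ≥ V(s)^q N(χ_(0,s))` with `N(χ_(0,s)) > 0`, letting `i → ∞` gives `V(s)^m ≤ G`, and
`s → 0` gives the claim.
-/

open MeasureTheory ENNReal NNReal

open Set Filter Topology

theorem tendsto_measure_Ioo_nhdsGT (ν : Measure ℝ) (a b : ℝ) :
    Tendsto (fun x => ν (Ioo x b)) (𝓝[>] a) (𝓝 (ν (Ioo a b))) := by
  have : (atBot : Filter (Ioi a)).IsCountablyGenerated := by
    rw [← comap_coe_Ioi_nhdsGT a]
    infer_instance
  have hU : Ioo a b = ⋃ x : Ioi a, Ioo (x : ℝ) b := by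
    ext y
    simp only [mem_Ioo, mem_iUnion, Subtype.exists, mem_Ioi, exists_prop]
    constructor
    · rintro ⟨hay, hyb⟩
      obtain ⟨x, hax, hxy⟩ := exists_between hay
      exact ⟨x, hax, hxy, hyb⟩
    · rintro ⟨x, hax, hxy, hyb⟩
      exact ⟨hax.trans hxy, hyb⟩
  rw [← map_coe_Ioi_atBot a, tendsto_map'_iff, hU]
  exact tendsto_measure_iUnion_atBot fun x y hxy => Ioo_subset_Ioo_left hxy

theorem pow_mul_sub_le_setLIntegral_measure_Ioo_pow {ν : Measure ℝ} [NullSingletonClass ν]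
    {a t : ℝ} {θ : ℝ≥0∞} (hθ : θ < ν (Ioo a t)) (p : ℕ) :
    θ ^ p * (ν (Ioo a t) - θ) ≤ ∫⁻ r in Ioo a t, ν (Ioo r t) ^ p ∂ν := by
  set S := {x ∈ Icc a t | θ ≤ ν (Ioo x t)}
  have hat : a ≤ t := by
    by_contra! h
    simp [Ioo_eq_empty_of_le h.le] at hθ
  have haS : a ∈ S := ⟨⟨le_rfl, hat⟩, hθ.le⟩
  have hSbdd : BddAbove S := ⟨t, fun x hx => hx.1.2⟩
  set c := sSup S
  have hac : a ≤ c := le_csSup hSbdd haS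
  have hct : c ≤ t := csSup_le ⟨a, haS⟩ fun x hx => hx.1.2
  have hle_left : ∀ r ∈ Ioo a c, θ ≤ ν (Ioo r t) := fun r hr => by
    obtain ⟨x, hxS, hrx⟩ := exists_lt_of_lt_csSup ⟨a, haS⟩ hr.2
    exact hxS.2.trans (measure_mono (Ioo_subset_Ioo_left hrx.le))
  have hright : ν (Ioo c t) ≤ θ := by
    refine le_of_tendsto (tendsto_measure_Ioo_nhdsGT ν c t)
      (eventually_nhdsWithin_of_forall fun x (hcx : c < x) => ?_)
    rcases le_or_gt x t with hxt | htx
    · by_contra! h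
      exact (not_le.2 hcx) (le_csSup hSbdd ⟨⟨hac.trans hcx.le, hxt⟩, h.le⟩)
    · simp [Ioo_eq_empty_of_le htx.le]
  have hsplit : ν (Ioo a t) ≤ ν (Ioo a c) + θ := by
    rcases hac.eq_or_lt with hac | hac
    · rw [← hac] at hright
      exact hright.trans le_add_self
    calc ν (Ioo a t) = ν (Ioo a c ∪ Ico c t) := by rw [Ioo_union_Ico_eq_Ioo hac hct]
      _ ≤ ν (Ioo a c) + ν (Ico c t) := measure_union_le _ _
      _ = ν (Ioo a c) + ν (Ioo c t) := by rw [measure_congr (Ioo_ae_eq_Ico (a := c))]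
      _ ≤ ν (Ioo a c) + θ := by gcongr
  calc θ ^ p * (ν (Ioo a t) - θ) ≤ θ ^ p * ν (Ioo a c) := by
        gcongr
        exact tsub_le_iff_right.2 hsplit
    _ = ∫⁻ _ in Ioo a c, θ ^ p ∂ν := (setLIntegral_const _ _).symm
    _ ≤ ∫⁻ r in Ioo a c, ν (Ioo r t) ^ p ∂ν :=
        setLIntegral_mono' measurableSet_Ioo fun r hr => by gcongr; exact hle_left r hr
    _ ≤ ∫⁻ r in Ioo a t, ν (Ioo r t) ^ p ∂ν := lintegral_mono_set (Ioo_subset_Ioo_right hct)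

theorem ENNReal.pow_succ_le_of_forall_lt {v J : ℝ≥0∞} {p : ℕ}
    (h : ∀ θ < v, θ ^ p * (v - θ) ≤ J) : v ^ (p + 1) ≤ ((p + 1 : ℕ) : ℝ≥0∞) ^ 2 * J := by
  rcases eq_or_ne v 0 with rfl | hv0
  · simp
  rcases eq_or_ne v ⊤ with rfl | hvtop
  · simp [top_le_iff.1 (by simpa using h 1 one_lt_top)]
  lift v to ℝ≥0 using hvtop
  have hv : 0 < v := by simpa [pos_iff_ne_zero] using hv0
  -- take `θ = v - ε`; Bernoulli's inequality gives `θ ^ p ≥ v ^ p / (p + 1)`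
  set ε : ℝ≥0 := v / (p + 1)
  have hεv : ε ≤ v := div_le_self v.2 (by simp)
  have hθ := h (v - ε : ℝ≥0) (by exact_mod_cast tsub_lt_self hv (by positivity))
  rw [← ENNReal.coe_sub, tsub_tsub_cancel_of_le hεv] at hθ
  have key : v ^ (p + 1) ≤ ((p + 1 : ℕ) : ℝ≥0) ^ 2 * ((v - ε) ^ p * ε) := by
    rw [← NNReal.coe_le_coe]
    push_cast [NNReal.coe_sub hεv, ε]
    have hp : (0 : ℝ) < p + 1 := by positivity
    have bernoulli : 1 / ((p : ℝ) + 1) ≤ (1 - 1 / (p + 1)) ^ p := by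
      have h1 : 1 / ((p : ℝ) + 1) ≤ 1 := (div_le_one hp).2 (by linarith)
      have hb := one_add_mul_le_pow (a := -(1 / ((p : ℝ) + 1))) (by linarith) p
      rwa [show (1 : ℝ) + p * -(1 / (p + 1)) = 1 / (p + 1) by field_simp; ring,
        ← sub_eq_add_neg] at hb
    calc (v : ℝ) ^ (p + 1) = (p + 1) ^ 2 * ((v ^ p * (1 / (p + 1))) * (v / (p + 1))) := by
          field_simp; ring
      _ ≤ (p + 1) ^ 2 * ((v ^ p * (1 - 1 / (p + 1)) ^ p) * (v / (p + 1))) := by gcongr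
      _ = (p + 1) ^ 2 * ((v - v / (p + 1)) ^ p * (v / (p + 1))) := by
          rw [← mul_pow, mul_sub, mul_one, mul_one_div]
  calc (v : ℝ≥0∞) ^ (p + 1) ≤ ((p + 1 : ℕ) : ℝ≥0∞) ^ 2 * (((v - ε : ℝ≥0) : ℝ≥0∞) ^ p * ε) := by
        exact_mod_cast key
    _ ≤ ((p + 1 : ℕ) : ℝ≥0∞) ^ 2 * J := by gcongr

theorem measure_Ioo_pow_succ_le {ν : Measure ℝ} [NullSingletonClass ν] (a t : ℝ) (p : ℕ) :
    ν (Ioo a t) ^ (p + 1) ≤ ((p + 1 : ℕ) : ℝ≥0∞) ^ 2 * ∫⁻ r in Ioo a t, ν (Ioo r t) ^ p ∂ν :=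
  ENNReal.pow_succ_le_of_forall_lt fun _ hθ => pow_mul_sub_le_setLIntegral_measure_Ioo_pow hθ p

theorem ENNReal.le_pow_two_pow_of_le_mul_sq {A B : ℝ≥0∞} (hA : 1 ≤ A) (hB : 1 ≤ B)
    {b : ℕ → ℝ≥0∞} (h : ∀ i, b (i + 1) ≤ A * B ^ i * b i ^ 2) (i : ℕ) :
    b i ≤ (A * B * b 0) ^ 2 ^ i := by
  -- the normalisation `A * B ^ (i + 1)` turns the recursion into pure squaring
  have hz : ∀ i, A * B ^ (i + 1) * b i ≤ (A * B * b 0) ^ 2 ^ i := by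
    intro i
    induction i with
    | zero => simp
    | succ i ih =>
      calc A * B ^ (i + 2) * b (i + 1) ≤ A * B ^ (i + 2) * (A * B ^ i * b i ^ 2) := by
            gcongr; exact h i
        _ = (A * B ^ (i + 1) * b i) ^ 2 := by ring
        _ ≤ ((A * B * b 0) ^ 2 ^ i) ^ 2 := by gcongr
        _ = (A * B * b 0) ^ 2 ^ (i + 1) := by rw [← pow_mul, pow_succ]
  exact (le_mul_of_one_le_left' (one_le_mul hA (one_le_pow₀ hB))).trans (hz i)

theorem ENNReal.le_of_forall_pow_two_pow_sub_one_mul_le {x G φ : ℝ≥0∞} (hφ : φ ≠ 0)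
    (h : ∀ i : ℕ, x ^ (2 ^ i - 1) * φ ≤ G ^ 2 ^ i) : x ≤ G := by
  by_contra! hGx
  have hφG : φ ≤ G := by simpa using h 0
  obtain ⟨y, hGy, hyx⟩ := exists_between hGx
  lift G to ℝ≥0 using (hGy.trans hyx).ne_top
  lift y to ℝ≥0 using hyx.ne_top
  lift φ to ℝ≥0 using ne_top_of_le_ne_top coe_ne_top hφG
  have hG : 0 < G := by exact_mod_cast (pos_iff_ne_zero.2 hφ).trans_le hφG
  have hy : ∀ i : ℕ, y ^ (2 ^ i - 1) * φ ≤ G ^ 2 ^ i := fun i => by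
    exact_mod_cast (by gcongr : (y : ℝ≥0∞) ^ (2 ^ i - 1) * φ ≤ x ^ (2 ^ i - 1) * φ).trans (h i)
  have hyG : 1 < y / G := (one_lt_div hG).2 (by exact_mod_cast hGy)
  obtain ⟨n, hn⟩ := pow_unbounded_of_one_lt (G / φ) hyG
  have hpow : (y / G) ^ (2 ^ n - 1) * φ ≤ G := by
    rw [div_pow, div_mul_eq_mul_div, div_le_iff₀ (by positivity), ← pow_succ',
      Nat.sub_add_cancel Nat.one_le_two_pow]
    exact hy n
  have hn' : G / φ < (y / G) ^ (2 ^ n - 1) :=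
    hn.trans_le (pow_le_pow_right₀ hyG.le (Nat.le_sub_one_of_lt Nat.lt_two_pow_self))
  rw [div_lt_iff₀ (by exact_mod_cast pos_iff_ne_zero.2 hφ)] at hn'
  exact hn'.not_ge hpow

namespace RINorm

variable (X : RINorm)

theorem le_const_mul_of_le {f g : ℝ → ℝ≥0∞} (hf : Measurable f) (hg : Measurable g) {c : ℝ≥0}
    (h : ∀ x, f x ≤ c * g x) : X.N f ≤ c * X.N g := by
  rw [← X.smul_eq g hg c]
  exact X.mono _ _ hf (hg.const_mul _) (ae_of_all _ h)

theorem const_mul_le_of_le {f g : ℝ → ℝ≥0∞} (hf : Measurable f) (hg : Measurable g) {c : ℝ≥0}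
    (h : ∀ x, c * f x ≤ g x) : c * X.N f ≤ X.N g := by
  rw [← X.smul_eq f hf c]
  exact X.mono _ _ (hf.const_mul _) hg (ae_of_all _ h)

theorem indicator_Ioo_ne_zero {s : ℝ} (hs : 0 < s) :
    X.N ((Ioo (0:ℝ) s).indicator fun _ => 1) ≠ 0 := by
  intro h
  have hnull : volume (Ioo 0 (min s 1)) = 0 := by
    rw [measure_eq_zero_iff_ae_notMem]
    filter_upwards [ae_restrict_iff' measurableSet_Ioo |>.1
      ((X.eq_zero_iff _ (measurable_const.indicator measurableSet_Ioo)).1 h)] with r hr hrs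
    have hr1 : r ∈ Ioo (0:ℝ) 1 := ⟨hrs.1, hrs.2.trans_le (min_le_right _ _)⟩
    simpa [indicator_of_mem (show r ∈ Ioo 0 s from ⟨hrs.1, hrs.2.trans_le (min_le_left _ _)⟩)]
      using hr hr1
  simp [Real.volume_Ioo] at hnull
  linarith

end RINorm

theorem antitone_HI (I : ℝ → ℝ) (g : ℝ → ℝ≥0∞) : Antitone (HI I g) :=
  fun _ _ hxy => lintegral_mono_set (Ioo_subset_Ioo_left hxy)

theorem measurable_iterate_HI (I : ℝ → ℝ) {g : ℝ → ℝ≥0∞} (hg : Measurable g) :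
    ∀ i, Measurable ((HI I)^[i] g)
  | 0 => hg
  | i + 1 => by
    rw [Function.iterate_succ_apply']
    exact (antitone_HI I _).measurable

noncomputable def hardyMeasure (I : ℝ → ℝ) : Measure ℝ :=
  (volume.restrict (Ioo 0 1)).withDensity fun r => (ENNReal.ofReal (I r))⁻¹

instance (I : ℝ → ℝ) : NullSingletonClass (hardyMeasure I) := by
  rw [hardyMeasure]
  infer_instance

noncomputable def tailPower (I : ℝ → ℝ) (t : ℝ) (q : ℕ) : ℝ → ℝ≥0∞ :=
  (Ioo 0 t).indicator fun r => hardyMeasure I (Ioo r t) ^ q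

section Hardy

variable {I : ℝ → ℝ} (X : RINorm)

theorem hardyMeasure_Ioo {s t : ℝ} (hs : 0 ≤ s) (ht : t ≤ 1) :
    hardyMeasure I (Ioo s t) = ∫⁻ r in Ioo s t, (ENNReal.ofReal (I r))⁻¹ := by
  rw [hardyMeasure, withDensity_apply _ measurableSet_Ioo,
    Measure.restrict_restrict measurableSet_Ioo, inter_eq_left.2 (Ioo_subset_Ioo hs ht)]

theorem hardyMeasure_Ioo_ne_top (hIpos : ∀ t ∈ Ioo (0:ℝ) 1, 0 < I t)
    (hImono : MonotoneOn I (Ioo 0 1)) {s t : ℝ} (hs : 0 < s) (ht : t ≤ 1) :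
    hardyMeasure I (Ioo s t) ≠ ⊤ := by
  rcases le_or_gt t s with hts | hst
  · simp [Ioo_eq_empty_of_le hts]
  have hs1 : s ∈ Ioo (0:ℝ) 1 := ⟨hs, hst.trans_le ht⟩
  rw [hardyMeasure_Ioo hs.le ht]
  refine ne_top_of_le_ne_top ?_ (setLIntegral_mono' measurableSet_Ioo fun r hr =>
    ENNReal.inv_le_inv.2 (ENNReal.ofReal_le_ofReal
      (hImono hs1 ⟨hs.trans hr.1, hr.2.trans_le ht⟩ hr.1.le)))
  rw [setLIntegral_const]
  exact mul_ne_top (inv_ne_top.2 (ofReal_pos.2 (hIpos s hs1)).ne') measure_Ioo_lt_top.ne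

theorem setLIntegral_hardyMeasure_le_HI (hImono : MonotoneOn I (Ioo 0 1)) {g : ℝ → ℝ≥0∞}
    (hg : Measurable g) (s t : ℝ) :
    ∫⁻ r in Ioo s t, g r ∂hardyMeasure I ≤ HI I g s := by
  have hw : AEMeasurable (fun r => (ENNReal.ofReal (I r))⁻¹) (volume.restrict (Ioo 0 1)) :=
    (aemeasurable_restrict_of_monotoneOn measurableSet_Ioo hImono).ennreal_ofReal.inv
  rw [hardyMeasure, setLIntegral_withDensity_eq_lintegral_mul₀ hw hg.aemeasurable measurableSet_Ioo,
    Measure.restrict_restrict measurableSet_Ioo]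
  refine (lintegral_mono_set (show Ioo s t ∩ Ioo 0 1 ⊆ Ioo s 1 from
    fun r hr => ⟨hr.1.1, hr.2.2⟩)).trans_eq ?_
  simp only [HI, Pi.mul_apply, div_eq_mul_inv, mul_comm]

theorem measurable_tailPower (I : ℝ → ℝ) (t : ℝ) (q : ℕ) : Measurable (tailPower I t q) := by
  have hanti : Antitone fun r => hardyMeasure I (Ioo r t) :=
    fun _ _ hxy => measure_mono (Ioo_subset_Ioo_left hxy)
  exact (hanti.measurable.pow_const q).indicator measurableSet_Ioo

theorem tailPower_zero (t : ℝ) : tailPower I t 0 = (Ioo 0 t).indicator fun _ => 1 := by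
  simp [tailPower]

theorem tailPower_add (t : ℝ) (a b : ℕ) :
    tailPower I t (a + b) = fun r => tailPower I t a r * tailPower I t b r := by
  simp only [tailPower, pow_add, indicator_mul]

theorem tailPower_le_iterate_HI (hImono : MonotoneOn I (Ioo 0 1)) (t : ℝ) (q i : ℕ) (s : ℝ) :
    tailPower I t (q + i) s ≤ ((q + i : ℕ) : ℝ≥0∞) ^ (2 * i) * (HI I)^[i] (tailPower I t q) s := by
  induction i generalizing s with
  | zero => simp
  | succ i ih =>
    by_cases hs : s ∈ Ioo 0 t
    swap
    · simp [tailPower, hs]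
    set K := ((q + i : ℕ) : ℝ≥0∞) ^ (2 * i)
    have htail : ∀ r ∈ Ioo s t, hardyMeasure I (Ioo r t) ^ (q + i) = tailPower I t (q + i) r :=
      fun r hr => by
        rw [tailPower, indicator_of_mem (show r ∈ Ioo 0 t from ⟨hs.1.trans hr.1, hr.2⟩)]
    calc tailPower I t (q + (i + 1)) s = hardyMeasure I (Ioo s t) ^ (q + i + 1) := by
          rw [tailPower, indicator_of_mem hs, add_assoc]
      _ ≤ ((q + i + 1 : ℕ) : ℝ≥0∞) ^ 2 *
            ∫⁻ r in Ioo s t, hardyMeasure I (Ioo r t) ^ (q + i) ∂hardyMeasure I :=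
          measure_Ioo_pow_succ_le s t (q + i)
      _ ≤ ((q + i + 1 : ℕ) : ℝ≥0∞) ^ 2 *
            ∫⁻ r in Ioo s t, K * (HI I)^[i] (tailPower I t q) r ∂hardyMeasure I := by
          gcongr 1
          exact setLIntegral_mono' measurableSet_Ioo fun r hr => (htail r hr).trans_le (ih r)
      _ ≤ ((q + i + 1 : ℕ) : ℝ≥0∞) ^ 2 * (K * (HI I)^[i + 1] (tailPower I t q) s) := by
          rw [lintegral_const_mul' _ _ (by simp [K]), Function.iterate_succ_apply']
          gcongr
          exact setLIntegral_hardyMeasure_le_HI hImono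
            (measurable_iterate_HI I (measurable_tailPower I t q) i) s t
      _ ≤ ((q + (i + 1) : ℕ) : ℝ≥0∞) ^ (2 * (i + 1)) * (HI I)^[i + 1] (tailPower I t q) s := by
          rw [← mul_assoc]
          gcongr
          rw [show 2 * (i + 1) = 2 + 2 * i by ring, pow_add, ← add_assoc]
          gcongr
          simp only [K]
          push_cast
          exact pow_le_pow_left' le_self_add _

theorem pow_mul_norm_indicator_le_norm_tailPower {s t : ℝ} (hst : s ≤ t)
    (hs : hardyMeasure I (Ioo s t) ≠ ⊤) (q : ℕ) :
    hardyMeasure I (Ioo s t) ^ q * X.N ((Ioo 0 s).indicator fun _ => 1)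
      ≤ X.N (tailPower I t q) := by
  lift hardyMeasure I (Ioo s t) to ℝ≥0 using hs with v hv
  have := X.const_mul_le_of_le (c := v ^ q) (measurable_const.indicator measurableSet_Ioo)
    (measurable_tailPower I t q) fun r => by
      by_cases hr : r ∈ Ioo 0 s
      · rw [tailPower, indicator_of_mem hr,
          indicator_of_mem (show r ∈ Ioo 0 t from ⟨hr.1, hr.2.trans_le hst⟩), mul_one,
          ENNReal.coe_pow, hv]
        exact pow_le_pow_left' (measure_mono (Ioo_subset_Ioo_left hr.2.le)) q
      · simp [hr]
  simpa using this

variable {m k : ℕ} {C : ℝ≥0}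

theorem norm_tailPower_add_add_le (hImono : MonotoneOn I (Ioo 0 1)) (t : ℝ) (hkm : k ≤ m)
    (hprod : ∀ f g : ℝ → ℝ≥0∞, Measurable f → Measurable g →
      X.N (fun t => (HI I)^[k] f t * (HI I)^[m - k] g t) ≤ (C : ℝ≥0∞) * X.N f * X.N g)
    (q q' : ℕ) :
    X.N (tailPower I t (q + q' + m)) ≤ ((q + q' + m : ℕ) : ℝ≥0∞) ^ (2 * m) *
      (C * X.N (tailPower I t q) * X.N (tailPower I t q')) := by
  have hmeas := measurable_iterate_HI I (measurable_tailPower I t q) k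
  have hmeas' := measurable_iterate_HI I (measurable_tailPower I t q') (m - k)
  have hK : ((q + q' + m : ℕ) : ℝ≥0∞) ^ (2 * m) = (((q + q' + m : ℕ) : ℝ≥0) ^ (2 * m) : ℝ≥0) := by
    norm_cast
  rw [hK]
  refine (X.le_const_mul_of_le (measurable_tailPower I t _) (hmeas.mul hmeas') fun r => ?_).trans
    (by gcongr; exact hprod _ _ (measurable_tailPower I t q) (measurable_tailPower I t q'))
  rw [show q + q' + m = (q + k) + (q' + (m - k)) by omega, tailPower_add]
  calc tailPower I t (q + k) r * tailPower I t (q' + (m - k)) r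
      ≤ (((q + k : ℕ) : ℝ≥0∞) ^ (2 * k) * (HI I)^[k] (tailPower I t q) r) *
        (((q' + (m - k) : ℕ) : ℝ≥0∞) ^ (2 * (m - k)) * (HI I)^[m - k] (tailPower I t q') r) := by
        gcongr <;> exact tailPower_le_iterate_HI hImono t _ _ r
    _ ≤ ((q + k + (q' + (m - k)) : ℕ) : ℝ≥0∞) ^ (2 * k) * (HI I)^[k] (tailPower I t q) r *
        (((q + k + (q' + (m - k)) : ℕ) : ℝ≥0∞) ^ (2 * (m - k)) *
          (HI I)^[m - k] (tailPower I t q') r) := by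
        gcongr ?_ ^ _ * _ * (?_ ^ _ * _)
        · exact_mod_cast Nat.le_add_right _ _
        · exact_mod_cast Nat.le_add_left _ _
    _ = (((q + k + (q' + (m - k)) : ℕ) : ℝ≥0) ^ (2 * m) : ℝ≥0) *
        ((HI I)^[k] (tailPower I t q) r * (HI I)^[m - k] (tailPower I t q') r) := by
        push_cast
        rw [show 2 * m = 2 * k + 2 * (m - k) by omega, pow_add]
        ring

theorem norm_tailPower_le_pow_two_pow (hImono : MonotoneOn I (Ioo 0 1)) (t : ℝ) (hkm : k ≤ m)
    (hprod : ∀ f g : ℝ → ℝ≥0∞, Measurable f → Measurable g →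
      X.N (fun t => (HI I)^[k] f t * (HI I)^[m - k] g t) ≤ (C : ℝ≥0∞) * X.N f * X.N g)
    (i : ℕ) :
    X.N (tailPower I t (m * (2 ^ i - 1))) ≤
      (((2 * m) ^ (2 * m) : ℕ) * (C + 1) * 4 ^ m *
        X.N ((Ioo 0 t).indicator fun _ => 1)) ^ 2 ^ i := by
  have hA : 1 ≤ (((2 * m) ^ (2 * m) : ℕ) : ℝ≥0∞) * (C + 1) :=
    one_le_mul (Nat.one_le_cast.2 (Nat.pos_of_ne_zero (by simp))) le_add_self
  have hstep : ∀ i, X.N (tailPower I t (m * (2 ^ (i + 1) - 1))) ≤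
      (((2 * m) ^ (2 * m) : ℕ) : ℝ≥0∞) * (C + 1) * (4 ^ m) ^ i *
        X.N (tailPower I t (m * (2 ^ i - 1))) ^ 2 := fun i => by
    have h2i : 1 ≤ 2 ^ i := Nat.one_le_two_pow
    have h := norm_tailPower_add_add_le X hImono t hkm hprod (m * (2 ^ i - 1)) (m * (2 ^ i - 1))
    rw [show m * (2 ^ i - 1) + m * (2 ^ i - 1) + m = m * (2 ^ (i + 1) - 1) by
      rw [pow_succ]; zify [h2i, (by omega : 1 ≤ 2 ^ i * 2)]; ring] at h
    have hK : (m * (2 ^ (i + 1) - 1)) ^ (2 * m) ≤ (2 * m) ^ (2 * m) * (4 ^ m) ^ i :=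
      calc (m * (2 ^ (i + 1) - 1)) ^ (2 * m) ≤ (2 * m * 2 ^ i) ^ (2 * m) :=
            Nat.pow_le_pow_left ((Nat.mul_le_mul_left m (Nat.sub_le _ _)).trans_eq
              (by rw [pow_succ]; ring)) _
        _ = (2 * m) ^ (2 * m) * (4 ^ m) ^ i := by
            rw [mul_pow, ← pow_mul, ← pow_mul, show (4 : ℕ) = 2 ^ 2 by rfl, ← pow_mul]
            congr 2
            ring
    refine h.trans ?_
    calc (((m * (2 ^ (i + 1) - 1)) : ℕ) : ℝ≥0∞) ^ (2 * m) *
          (C * X.N (tailPower I t (m * (2 ^ i - 1))) * X.N (tailPower I t (m * (2 ^ i - 1))))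
        ≤ (((2 * m) ^ (2 * m) * (4 ^ m) ^ i : ℕ) : ℝ≥0∞) *
          ((C + 1) * X.N (tailPower I t (m * (2 ^ i - 1))) *
            X.N (tailPower I t (m * (2 ^ i - 1)))) := by
          gcongr
          · exact_mod_cast hK
          · exact le_self_add
      _ = _ := by push_cast; ring
  simpa [tailPower_zero, mul_assoc] using
    ENNReal.le_pow_two_pow_of_le_mul_sq hA (one_le_pow₀ (by norm_num)) hstep i

end Hardy

theorem fundamental_estimate_of_two_hardys_general (m k : ℕ)
    (hk2 : k ≤ m - 1) (I : ℝ → ℝ)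
    (hIpos : ∀ t ∈ Set.Ioo (0:ℝ) 1, 0 < I t)
    (hImono : MonotoneOn I (Set.Ioo (0:ℝ) 1))
    (X : RINorm) (C : ℝ≥0)
    (hprod : ∀ f g : ℝ → ℝ≥0∞, Measurable f → Measurable g →
      X.N (fun t => (HI I)^[k] f t * (HI I)^[m - k] g t)
        ≤ (C : ℝ≥0∞) * X.N f * X.N g) :
    ∃ C' : ℝ≥0, 0 < C' ∧ ∀ t ∈ Set.Ioo (0:ℝ) 1,
      (∫⁻ s in Set.Ioo (0:ℝ) t, (ENNReal.ofReal (I s))⁻¹) ^ m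
        ≤ (C' : ℝ≥0∞) * X.N ((Set.Ioo (0:ℝ) t).indicator fun _ => 1) := by
  have hkm : k ≤ m := by omega
  refine ⟨((2 * m) ^ (2 * m) : ℕ) * (C + 1) * 4 ^ m,
    mul_pos (mul_pos (Nat.cast_pos.2 (Nat.pos_of_ne_zero (by simp))) (by positivity))
      (by positivity),
    fun t ht => ?_⟩
  have hV : ∀ s ∈ Ioo 0 t, hardyMeasure I (Ioo s t) ^ m ≤
      (((2 * m) ^ (2 * m) : ℕ) * (C + 1) * 4 ^ m * X.N ((Ioo 0 t).indicator fun _ => 1)) :=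
    fun s hs => ENNReal.le_of_forall_pow_two_pow_sub_one_mul_le (X.indicator_Ioo_ne_zero hs.1)
      fun i => by
        rw [← pow_mul]
        exact (pow_mul_norm_indicator_le_norm_tailPower X hs.2.le
          (hardyMeasure_Ioo_ne_top hIpos hImono hs.1 ht.2.le) _).trans
          (norm_tailPower_le_pow_two_pow X hImono t hkm hprod i)
  rw [← hardyMeasure_Ioo le_rfl ht.2.le]
  refine le_of_tendsto (((ENNReal.continuous_pow m).tendsto _).comp
    (tendsto_measure_Ioo_nhdsGT _ 0 t)) ?_
  filter_upwards [Ioo_mem_nhdsGT ht.1] with s hs using by exact_mod_cast hV s hs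

/-- if the bilinear estimate `N((H_I^k f)(H_I^{m-k} g)) ≤ C N(f) N(g)` holds,
then `(∫_0^t ds/I(s))^m ≤ C' N(χ_(0,t))` for all `t ∈ (0,1)`. -/
theorem fundamental_estimate_of_two_hardys (m k : ℕ) (hm : 2 ≤ m) (hk1 : 1 ≤ k)
    (hk2 : k ≤ m - 1) (I : ℝ → ℝ)
    (hIpos : ∀ t ∈ Set.Ioo (0:ℝ) 1, 0 < I t)
    (hImono : MonotoneOn I (Set.Ioo (0:ℝ) 1))
    (X : RINorm) (C : ℝ≥0) (hC : 0 < C)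
    (hprod : ∀ f g : ℝ → ℝ≥0∞, Measurable f → Measurable g →
      X.N (fun t => (HI I)^[k] f t * (HI I)^[m - k] g t)
        ≤ (C : ℝ≥0∞) * X.N f * X.N g) :
    ∃ C' : ℝ≥0, 0 < C' ∧ ∀ t ∈ Set.Ioo (0:ℝ) 1,
      (∫⁻ s in Set.Ioo (0:ℝ) t, (ENNReal.ofReal (I s))⁻¹) ^ m
        ≤ (C' : ℝ≥0∞) * X.N ((Set.Ioo (0:ℝ) t).indicator fun _ => 1) :=
  fundamental_estimate_of_two_hardys_general m k hk2 I hIpos hImono X C hprod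
end

section
/- Let n ∈ ℕ, n ≥ 2, and n' = n/(n−1). Let I : (0,1) → (0,∞) be nondecreasing, and suppose there exist a nondecreasing function ς : (0,1) → (0,∞) and constants 0 < c₁ ≤ c₂ such that c₁ ς(s) ≤ I(s)^{n'}/s ≤ c₂ ς(s) for every s ∈ (0,1). Then there exists a nondecreasing, continuously differentiable function Î : (0,1) → (0,∞) such that Î^{n'} is convex on (0,1), and there exist constants κ₁, κ₂ > 0 and a ∈ (0,1] such that κ₁ · I(a·s) ≤ Î(s) ≤ κ₂ · I(s) for every s ∈ (0,1). -/
/-!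
The running average `t ↦ t⁻¹ ∫₀ᵗ ς` of the nondecreasing function `ς` is continuous and still
nondecreasing, so its primitive `Ψ` is `C¹` and convex. Comparing the running average with `ς`
on `[s/4, s]` gives `(s/4) ς(s/4) ≤ Ψ(s) ≤ s ς(s)`, and `s ς(s)` is comparable to `I(s)^{n'}`;
hence `Î := Ψ^{1/n'}` works with `a = 1/4`.
-/

open Set MeasureTheory intervalIntegral

section MonotoneIntegral

variable {f : ℝ → ℝ} {a x y : ℝ}

theorem MonotoneOn.mul_le_integral (hf : MonotoneOn f (Icc x y)) (hxy : x ≤ y) :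
    (y - x) * f x ≤ ∫ u in x..y, f u := by
  have hint : IntervalIntegrable f volume x y := by
    rw [← uIcc_of_le hxy] at hf; exact hf.intervalIntegrable
  simpa using integral_mono_on hxy intervalIntegrable_const hint
    fun u hu => hf (left_mem_Icc.2 hxy) hu hu.1

theorem MonotoneOn.integral_le_mul (hf : MonotoneOn f (Icc x y)) (hxy : x ≤ y) :
    ∫ u in x..y, f u ≤ (y - x) * f y := by
  have hint : IntervalIntegrable f volume x y := by
    rw [← uIcc_of_le hxy] at hf; exact hf.intervalIntegrable
  simpa using integral_mono_on hxy hint intervalIntegrable_const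
    fun u hu => hf hu (right_mem_Icc.2 hxy) hu.2

theorem MonotoneOn.integral_add_integral (hf : MonotoneOn f (Icc a y)) (hax : a ≤ x)
    (hxy : x ≤ y) :
    (∫ u in a..x, f u) + ∫ u in x..y, f u = ∫ u in a..y, f u := by
  have hax' : MonotoneOn f (uIcc a x) := uIcc_of_le hax ▸ hf.mono (Icc_subset_Icc_right hxy)
  have hxy' : MonotoneOn f (uIcc x y) := uIcc_of_le hxy ▸ hf.mono (Icc_subset_Icc_left hax)
  exact integral_add_adjacent_intervals hax'.intervalIntegrable hxy'.intervalIntegrable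

theorem MonotoneOn.mul_le_integral_of_nonneg (hf : MonotoneOn f (Icc a y)) (hfa : 0 ≤ f a)
    (hx : x ∈ Icc a y) : (y - x) * f x ≤ ∫ u in a..y, f u := by
  have hhead := (hf.mono (Icc_subset_Icc_right hx.2)).mul_le_integral hx.1
  have htail := (hf.mono (Icc_subset_Icc_left hx.1)).mul_le_integral hx.2
  rw [← hf.integral_add_integral hx.1 hx.2]
  nlinarith [mul_nonneg (sub_nonneg.2 hx.1) hfa]

end MonotoneIntegral

/-- `runningAverage f 0 = 0` by the convention `x / 0 = 0`. -/
noncomputable def runningAverage (f : ℝ → ℝ) (t : ℝ) : ℝ :=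
  (∫ u in (0 : ℝ)..t, f u) / t

section RunningAverage

variable {f : ℝ → ℝ} {x y b : ℝ}

theorem runningAverage_le (hf : MonotoneOn f (Icc 0 y)) (hy : 0 < y) :
    runningAverage f y ≤ f y := by
  rw [runningAverage, div_le_iff₀ hy]
  simpa [mul_comm] using hf.integral_le_mul hy.le

theorem le_runningAverage (hf : MonotoneOn f (Icc 0 y)) (hy : 0 < y) :
    f 0 ≤ runningAverage f y := by
  rw [runningAverage, le_div_iff₀ hy]
  simpa [mul_comm] using hf.mul_le_integral hy.le

theorem runningAverage_le_runningAverage (hf : MonotoneOn f (Icc 0 y)) (hx : 0 < x)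
    (hxy : x ≤ y) : runningAverage f x ≤ runningAverage f y := by
  have hfx : MonotoneOn f (Icc 0 x) := hf.mono (Icc_subset_Icc_right hxy)
  have hfxy : MonotoneOn f (Icc x y) := hf.mono (Icc_subset_Icc_left hx.le)
  have hhead : (∫ u in (0 : ℝ)..x, f u) ≤ x * f x := by
    simpa using hfx.integral_le_mul hx.le
  have htail := hfxy.mul_le_integral hxy
  rw [runningAverage, runningAverage, div_le_div_iff₀ hx (hx.trans_le hxy),
    ← hf.integral_add_integral hx.le hxy]
  nlinarith [mul_le_mul_of_nonneg_left hhead (sub_nonneg.2 hxy)]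

theorem monotoneOn_runningAverage (hf : MonotoneOn f (Icc 0 y)) (hf₀ : 0 ≤ f 0) :
    MonotoneOn (runningAverage f) (Icc 0 y) := by
  intro s hs t ht hst
  rcases hs.1.eq_or_lt with rfl | hs₀
  · rcases ht.1.eq_or_lt with rfl | ht₀
    · rfl
    · simpa [runningAverage] using
        hf₀.trans (le_runningAverage (hf.mono (Icc_subset_Icc_right ht.2)) ht₀)
  · exact runningAverage_le_runningAverage (hf.mono (Icc_subset_Icc_right ht.2)) hs₀ hst

theorem continuousAt_runningAverage (hf : MonotoneOn f (Ico 0 b)) (hx : x ∈ Ioo 0 b) :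
    ContinuousAt (runningAverage f) x := by
  obtain ⟨c, hxc, hcb⟩ := exists_between hx.2
  have hf' : MonotoneOn f (uIcc 0 c) := by
    rw [uIcc_of_le (hx.1.trans hxc).le]; exact hf.mono (Icc_subset_Ico_right hcb)
  have hprim : ContinuousAt (fun t => ∫ u in (0 : ℝ)..t, f u) x :=
    (continuousOn_primitive_interval' hf'.intervalIntegrable left_mem_uIcc).continuousAt
      (by rw [uIcc_of_le (hx.1.trans hxc).le]; exact Icc_mem_nhds hx.1 hxc)
  exact hprim.div continuousAt_id hx.1.ne'

end RunningAverage

noncomputable def averagedPrimitive (f : ℝ → ℝ) (s : ℝ) : ℝ :=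
  ∫ t in (0 : ℝ)..s, runningAverage f t

section AveragedPrimitive

variable {f : ℝ → ℝ} {s b : ℝ}

theorem hasDerivAt_averagedPrimitive (hf : MonotoneOn f (Ico 0 b)) (hf₀ : 0 ≤ f 0)
    (hs : s ∈ Ioo 0 b) : HasDerivAt (averagedPrimitive f) (runningAverage f s) s := by
  have hmono : MonotoneOn (runningAverage f) (uIcc 0 s) := by
    rw [uIcc_of_le hs.1.le]
    exact monotoneOn_runningAverage (hf.mono (Icc_subset_Ico_right hs.2)) hf₀
  have hcont : ContinuousOn (runningAverage f) (Ioo 0 b) :=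
    fun x hx => (continuousAt_runningAverage hf hx).continuousWithinAt
  exact integral_hasDerivAt_right hmono.intervalIntegrable
    (hcont.stronglyMeasurableAtFilter isOpen_Ioo s hs) (continuousAt_runningAverage hf hs)

theorem contDiffOn_averagedPrimitive (hf : MonotoneOn f (Ico 0 b)) (hf₀ : 0 ≤ f 0) :
    ContDiffOn ℝ 1 (averagedPrimitive f) (Ioo 0 b) := by
  rw [show (1 : WithTop ℕ∞) = 0 + 1 from rfl, contDiffOn_succ_iff_deriv_of_isOpen isOpen_Ioo]
  refine ⟨fun s hs =>
    (hasDerivAt_averagedPrimitive hf hf₀ hs).differentiableAt.differentiableWithinAt, by simp, ?_⟩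
  rw [contDiffOn_zero]
  exact fun s hs => ((continuousAt_runningAverage hf hs).congr_of_eventuallyEq
    (Filter.eventually_of_mem (isOpen_Ioo.mem_nhds hs) fun t ht =>
      (hasDerivAt_averagedPrimitive hf hf₀ ht).deriv)).continuousWithinAt

theorem convexOn_averagedPrimitive (hf : MonotoneOn f (Ico 0 b)) (hf₀ : 0 ≤ f 0) :
    ConvexOn ℝ (Ioo 0 b) (averagedPrimitive f) := by
  have hderiv : ∀ s ∈ Ioo 0 b, deriv (averagedPrimitive f) s = runningAverage f s :=
    fun s hs => (hasDerivAt_averagedPrimitive hf hf₀ hs).deriv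
  have hC1 := contDiffOn_averagedPrimitive hf hf₀
  refine MonotoneOn.convexOn_of_deriv (convex_Ioo 0 b) hC1.continuousOn ?_ ?_ <;>
    rw [isOpen_Ioo.interior_eq]
  · exact hC1.differentiableOn one_ne_zero
  · intro x hx y hy hxy
    rw [hderiv x hx, hderiv y hy]
    exact runningAverage_le_runningAverage (hf.mono (Icc_subset_Ico_right hy.2)) hx.1 hxy

theorem monotoneOn_averagedPrimitive (hf : MonotoneOn f (Ico 0 b)) (hf₀ : 0 ≤ f 0) :
    MonotoneOn (averagedPrimitive f) (Ioo 0 b) := by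
  have hC1 := contDiffOn_averagedPrimitive hf hf₀
  refine monotoneOn_of_deriv_nonneg (convex_Ioo 0 b) hC1.continuousOn ?_ ?_ <;>
    rw [isOpen_Ioo.interior_eq]
  · exact hC1.differentiableOn one_ne_zero
  · intro s hs
    rw [(hasDerivAt_averagedPrimitive hf hf₀ hs).deriv]
    exact hf₀.trans (le_runningAverage (hf.mono (Icc_subset_Ico_right hs.2)) hs.1)

theorem averagedPrimitive_le (hf : MonotoneOn f (Icc 0 s)) (hf₀ : 0 ≤ f 0) (hs : 0 < s) :
    averagedPrimitive f s ≤ s * f s :=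
  calc averagedPrimitive f s ≤ s * runningAverage f s := by
        simpa [averagedPrimitive] using (monotoneOn_runningAverage hf hf₀).integral_le_mul hs.le
    _ ≤ s * f s := mul_le_mul_of_nonneg_left (runningAverage_le hf hs) hs.le

theorem mul_le_averagedPrimitive (hf : MonotoneOn f (Icc 0 s)) (hf₀ : 0 ≤ f 0) (hs : 0 < s) :
    s / 4 * f (s / 4) ≤ averagedPrimitive f s :=
  calc s / 4 * f (s / 4) = (s / 2 - s / 4) * f (s / 4) := by ring
    _ ≤ ∫ u in (0 : ℝ)..s / 2, f u :=
        (hf.mono (Icc_subset_Icc_right (by linarith))).mul_le_integral_of_nonneg hf₀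
          ⟨by linarith, by linarith⟩
    _ = (s - s / 2) * runningAverage f (s / 2) := by
        rw [runningAverage]; field_simp; ring
    _ ≤ averagedPrimitive f s :=
        (monotoneOn_runningAverage hf hf₀).mul_le_integral_of_nonneg (by simp [runningAverage])
          ⟨by linarith, by linarith⟩

end AveragedPrimitive

theorem monotoneOn_indicator_Ioi {g : ℝ → ℝ} {a b : ℝ} (hg : MonotoneOn g (Ioo a b))
    (hg₀ : ∀ t ∈ Ioo a b, 0 ≤ g t) : MonotoneOn ((Ioi a).indicator g) (Ico a b) := by
  intro x hx y hy hxy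
  rcases hx.1.eq_or_lt with rfl | hax
  · rcases hy.1.eq_or_lt with rfl | hay
    · rfl
    · simpa [indicator_of_mem (mem_Ioi.2 hay)] using hg₀ y ⟨hay, hy.2⟩
  · have hay := hax.trans_le hxy
    rw [indicator_of_mem (mem_Ioi.2 hax), indicator_of_mem (mem_Ioi.2 hay)]
    exact hg ⟨hax, hx.2⟩ ⟨hay, hy.2⟩ hxy

theorem MonotoneOn.exists_convexOn_contDiffOn_between {ς : ℝ → ℝ} {b : ℝ}
    (hmono : MonotoneOn ς (Ioo 0 b)) (hnonneg : ∀ s ∈ Ioo 0 b, 0 ≤ ς s) :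
    ∃ Ψ : ℝ → ℝ, MonotoneOn Ψ (Ioo 0 b) ∧ ContDiffOn ℝ 1 Ψ (Ioo 0 b) ∧
      ConvexOn ℝ (Ioo 0 b) Ψ ∧ ∀ s ∈ Ioo 0 b, s / 4 * ς (s / 4) ≤ Ψ s ∧ Ψ s ≤ s * ς s := by
  set f := (Ioi (0 : ℝ)).indicator ς
  have hf : MonotoneOn f (Ico 0 b) := monotoneOn_indicator_Ioi hmono hnonneg
  have hf₀ : 0 ≤ f 0 := by simp [f]
  refine ⟨averagedPrimitive f, monotoneOn_averagedPrimitive hf hf₀,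
    contDiffOn_averagedPrimitive hf hf₀, convexOn_averagedPrimitive hf hf₀, fun s hs => ?_⟩
  have hfs : MonotoneOn f (Icc 0 s) := hf.mono (Icc_subset_Ico_right hs.2)
  have hs4 : s / 4 ∈ Ioi (0 : ℝ) := mem_Ioi.2 (by linarith [hs.1])
  exact ⟨indicator_of_mem hs4 ς ▸ mul_le_averagedPrimitive hfs hf₀ hs.1,
    indicator_of_mem hs.1 ς ▸ averagedPrimitive_le hfs hf₀ hs.1⟩

section RpowInv

variable {x y c q : ℝ}

theorem Real.rpow_div_rpow_inv (hy : 0 ≤ y) (hc : 0 ≤ c) (hq : q ≠ 0) :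
    (y ^ q / c) ^ q⁻¹ = (c ^ q⁻¹)⁻¹ * y := by
  rw [Real.div_rpow (Real.rpow_nonneg hy q) hc, ← Real.rpow_mul hy, mul_inv_cancel₀ hq,
    Real.rpow_one, div_eq_inv_mul]

theorem Real.rpow_inv_le_of_le_rpow_div (hx : 0 ≤ x) (hy : 0 ≤ y) (hc : 0 ≤ c) (hq : 0 < q)
    (h : x ≤ y ^ q / c) : x ^ q⁻¹ ≤ (c ^ q⁻¹)⁻¹ * y :=
  Real.rpow_div_rpow_inv hy hc hq.ne' ▸ Real.rpow_le_rpow hx h (inv_nonneg.2 hq.le)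

theorem Real.le_rpow_inv_of_rpow_div_le (hy : 0 ≤ y) (hc : 0 ≤ c) (hq : 0 < q)
    (h : y ^ q / c ≤ x) : (c ^ q⁻¹)⁻¹ * y ≤ x ^ q⁻¹ :=
  Real.rpow_div_rpow_inv hy hc hq.ne' ▸
    Real.rpow_le_rpow (div_nonneg (Real.rpow_nonneg hy q) hc) h (inv_nonneg.2 hq.le)

end RpowInv

theorem smooth_equivalent_isoperimetric_profile_general (n : ℕ) (hn : 2 ≤ n) (I ς : ℝ → ℝ)
    (hIpos : ∀ s ∈ Set.Ioo (0:ℝ) 1, 0 < I s)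
    (hςmono : MonotoneOn ς (Set.Ioo (0:ℝ) 1))
    (hςpos : ∀ s ∈ Set.Ioo (0:ℝ) 1, 0 < ς s)
    (c₁ c₂ : ℝ) (hc₁ : 0 < c₁) (hc₁₂ : c₁ ≤ c₂)
    (hlow : ∀ s ∈ Set.Ioo (0:ℝ) 1, c₁ * ς s ≤ I s ^ ((n : ℝ) / ((n : ℝ) - 1)) / s)
    (hup : ∀ s ∈ Set.Ioo (0:ℝ) 1, I s ^ ((n : ℝ) / ((n : ℝ) - 1)) / s ≤ c₂ * ς s) :
    ∃ Ihat : ℝ → ℝ,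
      MonotoneOn Ihat (Set.Ioo (0:ℝ) 1) ∧
      (∀ s ∈ Set.Ioo (0:ℝ) 1, 0 < Ihat s) ∧
      ContDiffOn ℝ 1 Ihat (Set.Ioo (0:ℝ) 1) ∧
      ConvexOn ℝ (Set.Ioo (0:ℝ) 1) (fun s => Ihat s ^ ((n : ℝ) / ((n : ℝ) - 1))) ∧
      ∃ κ₁ κ₂ : ℝ, 0 < κ₁ ∧ 0 < κ₂ ∧ ∃ a ∈ Set.Ioc (0:ℝ) 1,
        ∀ s ∈ Set.Ioo (0:ℝ) 1, κ₁ * I (a * s) ≤ Ihat s ∧ Ihat s ≤ κ₂ * I s := by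
  set q : ℝ := (n : ℝ) / ((n : ℝ) - 1)
  have hq : 0 < q := by
    have : (2 : ℝ) ≤ n := by exact_mod_cast hn
    exact div_pos (by linarith) (by linarith)
  have hc₂ : 0 < c₂ := hc₁.trans_le hc₁₂
  obtain ⟨Ψ, hΨmono, hΨC1, hΨconv, hΨbounds⟩ :=
    hςmono.exists_convexOn_contDiffOn_between fun s hs => (hςpos s hs).le
  have hquarter : ∀ s ∈ Ioo (0 : ℝ) 1, s / 4 ∈ Ioo (0 : ℝ) 1 := fun s hs =>
    ⟨by linarith [hs.1], by linarith [hs.2]⟩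
  have hpos : ∀ s ∈ Ioo (0 : ℝ) 1, 0 < Ψ s := fun s hs =>
    (mul_pos (hquarter s hs).1 (hςpos _ (hquarter s hs))).trans_le (hΨbounds s hs).1
  refine ⟨fun s => Ψ s ^ q⁻¹, fun x hx y hy hxy => ?_,
    fun s hs => Real.rpow_pos_of_pos (hpos s hs) _, hΨC1.rpow_const_of_ne fun s hs => (hpos s hs).ne', hΨconv.congr fun s hs => ?_,
    (c₂ ^ q⁻¹)⁻¹, (c₁ ^ q⁻¹)⁻¹, by positivity, by positivity, 1 / 4, ⟨by norm_num, by norm_num⟩,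
    fun s hs => ⟨?_, ?_⟩⟩
  · exact Real.rpow_le_rpow (hpos x hx).le (hΨmono hx hy hxy) (inv_nonneg.2 hq.le)
  · rw [← Real.rpow_mul (hpos s hs).le, inv_mul_cancel₀ hq.ne', Real.rpow_one]
  · rw [show 1 / 4 * s = s / 4 by ring]
    refine Real.le_rpow_inv_of_rpow_div_le (hIpos _ (hquarter s hs)).le hc₂.le hq ?_
    have hI := (div_le_iff₀ (hquarter s hs).1).1 (hup _ (hquarter s hs))
    rw [div_le_iff₀ hc₂]
    linarith [mul_le_mul_of_nonneg_right (hΨbounds s hs).1 hc₂.le]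
  · refine Real.rpow_inv_le_of_le_rpow_div (hpos s hs).le (hIpos s hs).le hc₁.le hq ?_
    have hI := (le_div_iff₀ hs.1).1 (hlow s hs)
    rw [le_div_iff₀ hc₁]
    linarith [mul_le_mul_of_nonneg_right (hΨbounds s hs).2 hc₁.le]

/-- if `I^{n'}(s)/s` is equivalent to a nondecreasing function, then `I` is
equivalent to a nondecreasing `C¹` function `Î` with `Î^{n'}` convex. -/
theorem smooth_equivalent_isoperimetric_profile (n : ℕ) (hn : 2 ≤ n) (I ς : ℝ → ℝ)
    (hImono : MonotoneOn I (Set.Ioo (0:ℝ) 1))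
    (hIpos : ∀ s ∈ Set.Ioo (0:ℝ) 1, 0 < I s)
    (hςmono : MonotoneOn ς (Set.Ioo (0:ℝ) 1))
    (hςpos : ∀ s ∈ Set.Ioo (0:ℝ) 1, 0 < ς s)
    (c₁ c₂ : ℝ) (hc₁ : 0 < c₁) (hc₁₂ : c₁ ≤ c₂)
    (hlow : ∀ s ∈ Set.Ioo (0:ℝ) 1, c₁ * ς s ≤ I s ^ ((n : ℝ) / ((n : ℝ) - 1)) / s)
    (hup : ∀ s ∈ Set.Ioo (0:ℝ) 1, I s ^ ((n : ℝ) / ((n : ℝ) - 1)) / s ≤ c₂ * ς s) :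
    ∃ Ihat : ℝ → ℝ,
      MonotoneOn Ihat (Set.Ioo (0:ℝ) 1) ∧
      (∀ s ∈ Set.Ioo (0:ℝ) 1, 0 < Ihat s) ∧
      ContDiffOn ℝ 1 Ihat (Set.Ioo (0:ℝ) 1) ∧
      ConvexOn ℝ (Set.Ioo (0:ℝ) 1) (fun s => Ihat s ^ ((n : ℝ) / ((n : ℝ) - 1))) ∧
      ∃ κ₁ κ₂ : ℝ, 0 < κ₁ ∧ 0 < κ₂ ∧ ∃ a ∈ Set.Ioc (0:ℝ) 1,
        ∀ s ∈ Set.Ioo (0:ℝ) 1, κ₁ * I (a * s) ≤ Ihat s ∧ Ihat s ≤ κ₂ * I s :=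
  smooth_equivalent_isoperimetric_profile_general n hn I ς hIpos hςmono hςpos c₁ c₂ hc₁ hc₁₂ hlow
    hup
end

section
/- Let n ∈ ℕ, n ≥ 2, and n' = n/(n−1). Let I : (0,1] → (0,∞) be nondecreasing and continuously differentiable with I^{n'} convex on (0,1]. Let L = ∫_0^1 dr/I(r) ∈ (0,∞] and let M : [0,L) → (0,1] be the function determined by ∫_{M(t)}^1 dr/I(r) = t. Let ω_{n−1} denote the Lebesgue measure of the unit ball in ℝ^{n−1}. Then the function η(r) = (I(M(r))/ω_{n−1})^{1/(n−1)}, r ∈ (0,L), is convex on (0,L), its derivative satisfies ω_{n−1}^{1/(n−1)} η'(r) = −(1/(n−1)) I'(M(r)) I(M(r))^{1/(n−1)} for r ∈ (0,L), and η has a finite right derivative at 0, namely η'(0⁺) = −(1/(n−1)) ω_{n−1}^{−1/(n−1)} I'(1) I(1)^{1/(n−1)}. -/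
open MeasureTheory ENNReal NNReal

/-- `L = ∫_0^1 dr / I(r)`, with values in `(0,∞]`. -/
noncomputable def Lint (I : ℝ → ℝ) : ℝ≥0∞ :=
  ∫⁻ r in Set.Ioo (0:ℝ) 1, ENNReal.ofReal (1 / I r)

/-- The Lebesgue measure of the unit ball in `ℝ^d`. -/
noncomputable def omegaBall (d : ℕ) : ℝ :=
  (volume (Metric.ball (0 : EuclideanSpace ℝ (Fin d)) 1)).toReal

/-!
`M` inverts the decreasing function `F x = ∫_x^1 dr / I(r)`, whose difference quotients
are at most `-1 / I(1)`; hence `M` is antitone and Lipschitz, and the inverse function theorem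
gives `M' = -I(M)`. By the chain rule `η' = -p I'(M) I(M)^p / ω^p`. Convexity of `I^(p+1)`
makes `I' I^p` nondecreasing, and `M` is antitone, so `η'` is nondecreasing and `η` is convex.
Finally `M(0) = 1` and `η'(r) → -p I'(1) I(1)^p / ω^p` as `r → 0⁺`, which is the one-sided
derivative at `0`.
-/

open Set Filter Topology

theorem omegaBall_pos (d : ℕ) : 0 < omegaBall d :=
  ENNReal.toReal_pos (Metric.measure_ball_pos _ _ one_pos).ne' measure_ball_lt_top.ne

theorem Lint_pos {I : ℝ → ℝ} (hmono : MonotoneOn I (Ioc 0 1))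
    (hpos : ∀ t ∈ Ioc (0:ℝ) 1, 0 < I t) : 0 < Lint I := by
  have h1 : (1:ℝ) ∈ Ioc 0 1 := right_mem_Ioc.2 one_pos
  calc (0 : ℝ≥0∞) < ∫⁻ _ in Ioo (0:ℝ) 1, ENNReal.ofReal (1 / I 1) := by
        simp [hpos 1 h1]
    _ ≤ Lint I := setLIntegral_mono' measurableSet_Ioo fun x hx ↦ ENNReal.ofReal_le_ofReal <|
        one_div_le_one_div_of_le (hpos x (Ioo_subset_Ioc_self hx))
          (hmono (Ioo_subset_Ioc_self hx) h1 hx.2.le)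

section LeftInverse

variable {F M : ℝ → ℝ} {A T : Set ℝ} {c : ℝ}

theorem antitoneOn_of_leftInvOn (hc : 0 ≤ c)
    (hF : ∀ a ∈ A, ∀ b ∈ A, a ≤ b → b - a ≤ c * (F a - F b))
    (hMA : MapsTo M T A) (hFM : LeftInvOn F M T) : AntitoneOn M T := by
  intro s hs t ht hst
  by_contra! hlt
  have := hF _ (hMA hs) _ (hMA ht) hlt.le
  rw [hFM hs, hFM ht] at this
  nlinarith

theorem lipschitzOnWith_of_leftInvOn (hc : 0 ≤ c)
    (hF : ∀ a ∈ A, ∀ b ∈ A, a ≤ b → b - a ≤ c * (F a - F b))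
    (hMA : MapsTo M T A) (hFM : LeftInvOn F M T) : LipschitzOnWith (Real.toNNReal c) M T := by
  refine LipschitzOnWith.of_le_add_mul' c fun s hs t ht ↦ ?_
  rcases le_total (M s) (M t) with hst | hts
  · nlinarith [dist_nonneg (x := s) (y := t)]
  · have := hF _ (hMA ht) _ (hMA hs) hts
    rw [hFM hs, hFM ht] at this
    nlinarith [Real.dist_eq s t, neg_abs_le (s - t)]

end LeftInverse

theorem intervalIntegrable_one_div_of_monotoneOn {I : ℝ → ℝ} {a b : ℝ} (hab : a ≤ b)
    (hI : MonotoneOn I (Icc a b)) (ha : 0 < I a) :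
    IntervalIntegrable (fun x ↦ 1 / I x) volume a b := by
  refine AntitoneOn.intervalIntegrable fun x hx y hy hxy ↦ ?_
  rw [uIcc_of_le hab] at hx hy
  exact one_div_le_one_div_of_le (ha.trans_le (hI (left_mem_Icc.2 hab) hx hx.1)) (hI hx hy hxy)

theorem sub_div_le_integral_one_div {I : ℝ → ℝ} {a b : ℝ} (hab : a ≤ b)
    (hI : MonotoneOn I (Icc a b)) (ha : 0 < I a) :
    (b - a) / I b ≤ ∫ x in a..b, 1 / I x := by
  have h := intervalIntegral.integral_mono_on hab intervalIntegrable_const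
    (intervalIntegrable_one_div_of_monotoneOn hab hI ha) fun x hx ↦
      one_div_le_one_div_of_le (ha.trans_le (hI (left_mem_Icc.2 hab) hx hx.1))
        (hI hx (right_mem_Icc.2 hab) hx.2)
  simpa [div_eq_mul_one_div (b - a)] using h

theorem sub_le_mul_integral_sub {I : ℝ → ℝ} (hmono : MonotoneOn I (Ioc 0 1))
    (hpos : ∀ t ∈ Ioc (0:ℝ) 1, 0 < I t) {a b : ℝ} (ha : a ∈ Ioc 0 1) (hb : b ∈ Ioc 0 1)
    (hab : a ≤ b) :
    b - a ≤ I 1 * ((∫ x in a..1, 1 / I x) - ∫ x in b..1, 1 / I x) := by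
  have h1 : (1:ℝ) ∈ Ioc 0 1 := right_mem_Ioc.2 one_pos
  have hmono_ab := hmono.mono (Icc_subset_Ioc ha.1 hb.2)
  have hbound := sub_div_le_integral_one_div hab hmono_ab (hpos a ha)
  rw [← intervalIntegral.integral_add_adjacent_intervals
    (intervalIntegrable_one_div_of_monotoneOn hab hmono_ab (hpos a ha))
    (intervalIntegrable_one_div_of_monotoneOn hb.2 (hmono.mono (Icc_subset_Ioc hb.1 le_rfl))
      (hpos b hb)), add_sub_cancel_right]
  have hint_nonneg : 0 ≤ ∫ x in a..b, 1 / I x :=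
    (div_nonneg (sub_nonneg.2 hab) (hpos b hb).le).trans hbound
  calc b - a ≤ I b * ∫ x in a..b, 1 / I x := (div_le_iff₀' (hpos b hb)).1 hbound
    _ ≤ I 1 * ∫ x in a..b, 1 / I x := mul_le_mul_of_nonneg_right (hmono hb h1 hb.2) hint_nonneg

theorem isOpen_setOf_ofReal_lt (L : ℝ≥0∞) : IsOpen {t : ℝ | ENNReal.ofReal t < L} :=
  isOpen_Iio.preimage ENNReal.continuous_ofReal

theorem hasDerivAt_integral_left_of_continuousOn {f : ℝ → ℝ} {a b x : ℝ}
    (hf : ContinuousOn f (Ioc a b)) (hx : x ∈ Ioo a b) :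
    HasDerivAt (fun u ↦ ∫ v in u..b, f v) (-f x) x :=
  intervalIntegral.integral_hasDerivAt_left
    ((hf.mono (Icc_subset_Ioc hx.1 le_rfl)).intervalIntegrable_of_Icc hx.2.le)
    ((hf.mono Ioo_subset_Ioc_self).stronglyMeasurableAtFilter isOpen_Ioo x hx)
    (hf.continuousAt (Ioc_mem_nhds hx.1 hx.2))

theorem monotoneOn_derivWithin_mul_rpow_of_convexOn {f : ℝ → ℝ} {s : Set ℝ} {q : ℝ}
    (hq : 0 < q) (hs : UniqueDiffOn ℝ s) (hf : DifferentiableOn ℝ f s)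
    (hpos : ∀ x ∈ s, 0 < f x) (hconv : ConvexOn ℝ s fun x ↦ f x ^ q) :
    MonotoneOn (fun x ↦ derivWithin f s x * f x ^ (q - 1)) s := by
  have hderiv : ∀ x ∈ s,
      derivWithin (fun x ↦ f x ^ q) s x = q * (derivWithin f s x * f x ^ (q - 1)) := by
    intro x hx
    rw [derivWithin_rpow_const (hf x hx) (Or.inl (hpos x hx).ne') (hs x hx)]
    ring
  intro x hx y hy hxy
  have h := hconv.monotoneOn_derivWithin (hf.rpow_const fun x hx ↦ Or.inl (hpos x hx).ne')
    hx hy hxy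
  rw [hderiv x hx, hderiv y hy] at h
  exact le_of_mul_le_mul_left h hq

structure IsProfileInverse (I M : ℝ → ℝ) : Prop where
  monotoneOn : MonotoneOn I (Ioc 0 1)
  pos : ∀ t ∈ Ioc (0:ℝ) 1, 0 < I t
  inverse : ∀ t : ℝ, 0 ≤ t → ENNReal.ofReal t < Lint I →
    M t ∈ Ioc (0:ℝ) 1 ∧ ∫ r in (M t)..1, 1 / I r = t

/-- The paper's `η(r) = (I(M(r))/ω)^p`; the theorem concerns `ω = ω_{n-1}` and `p = 1/(n-1)`. -/
noncomputable def eta (I M : ℝ → ℝ) (ω p r : ℝ) : ℝ := (I (M r) / ω) ^ p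

namespace IsProfileInverse

variable {I M : ℝ → ℝ} {ω p : ℝ}

theorem antitoneOn (h : IsProfileInverse I M) :
    AntitoneOn M {t | 0 ≤ t ∧ ENNReal.ofReal t < Lint I} :=
  antitoneOn_of_leftInvOn (F := fun x ↦ ∫ r in x..1, 1 / I r)
    (h.pos 1 (right_mem_Ioc.2 one_pos)).le
    (fun _ ha _ hb hab ↦ sub_le_mul_integral_sub h.monotoneOn h.pos ha hb hab)
    (fun t ht ↦ (h.inverse t ht.1 ht.2).1) fun t ht ↦ (h.inverse t ht.1 ht.2).2

theorem continuousOn (h : IsProfileInverse I M) :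
    ContinuousOn M {t | 0 ≤ t ∧ ENNReal.ofReal t < Lint I} :=
  (lipschitzOnWith_of_leftInvOn (F := fun x ↦ ∫ r in x..1, 1 / I r)
    (h.pos 1 (right_mem_Ioc.2 one_pos)).le
    (fun _ ha _ hb hab ↦ sub_le_mul_integral_sub h.monotoneOn h.pos ha hb hab)
    (fun t ht ↦ (h.inverse t ht.1 ht.2).1) fun t ht ↦ (h.inverse t ht.1 ht.2).2).continuousOn

theorem ofReal_zero_lt_Lint (h : IsProfileInverse I M) : ENNReal.ofReal 0 < Lint I := by
  simpa using Lint_pos h.monotoneOn h.pos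

theorem apply_zero (h : IsProfileInverse I M) : M 0 = 1 := by
  obtain ⟨hmem, hint⟩ := h.inverse 0 le_rfl h.ofReal_zero_lt_Lint
  have := sub_le_mul_integral_sub h.monotoneOn h.pos hmem (right_mem_Ioc.2 one_pos) hmem.2
  rw [hint, intervalIntegral.integral_same, sub_zero, mul_zero] at this
  linarith [hmem.2]

theorem mem_Ioo {r : ℝ} (h : IsProfileInverse I M) (hr : 0 < r)
    (hrL : ENNReal.ofReal r < Lint I) : M r ∈ Ioo 0 1 := by
  obtain ⟨hmem, hint⟩ := h.inverse r hr.le hrL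
  refine ⟨hmem.1, hmem.2.lt_of_ne fun h1 ↦ ?_⟩
  rw [h1, intervalIntegral.integral_same] at hint
  exact hr.ne hint

theorem hasDerivAt {r : ℝ} (h : IsProfileInverse I M) (hI : ContinuousOn I (Ioc 0 1))
    (hr : 0 < r) (hrL : ENNReal.ofReal r < Lint I) : HasDerivAt M (-I (M r)) r := by
  have hIr : 0 < I (M r) := h.pos _ (Ioo_subset_Ioc_self (h.mem_Ioo hr hrL))
  have hnhds : {t | 0 < t ∧ ENNReal.ofReal t < Lint I} ∈ 𝓝 r :=
    (isOpen_Ioi.inter (isOpen_setOf_ofReal_lt _)).mem_nhds ⟨hr, hrL⟩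
  have hF := hasDerivAt_integral_left_of_continuousOn (f := fun x ↦ 1 / I x)
    (continuousOn_const.div hI fun x hx ↦ (h.pos x hx).ne') (h.mem_Ioo hr hrL)
  have hinv := hF.of_local_left_inverse
    (h.continuousOn.continuousAt (mem_of_superset hnhds fun t ht ↦ ⟨ht.1.le, ht.2⟩))
    (by simpa using hIr.ne')
    (eventually_of_mem hnhds fun t ht ↦ (h.inverse t ht.1.le ht.2).2)
  simpa using hinv

theorem tendsto_nhdsGT_zero (h : IsProfileInverse I M) :
    Tendsto M (𝓝[>] 0) (𝓝[Ioc 0 1] 1) := by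
  have hT : {t | 0 ≤ t ∧ ENNReal.ofReal t < Lint I} ∈ 𝓝[>] 0 :=
    mem_of_superset
      (inter_mem_nhdsWithin _ ((isOpen_setOf_ofReal_lt _).mem_nhds h.ofReal_zero_lt_Lint))
      fun t ht ↦ ⟨le_of_lt ht.1, ht.2⟩
  have hcont := h.continuousOn 0 ⟨le_rfl, h.ofReal_zero_lt_Lint⟩
  rw [ContinuousWithinAt, h.apply_zero] at hcont
  exact tendsto_nhdsWithin_iff.2 ⟨hcont.mono_left (nhdsWithin_le_of_mem hT),
    mem_of_superset hT fun t ht ↦ (h.inverse t ht.1 ht.2).1⟩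

end IsProfileInverse

namespace IsProfileInverse

variable {I M : ℝ → ℝ} {ω p : ℝ}

theorem hasDerivAt_eta {r : ℝ} (h : IsProfileInverse I M) (hI : DifferentiableOn ℝ I (Ioc 0 1))
    (hω : 0 < ω) (hr : 0 < r) (hrL : ENNReal.ofReal r < Lint I) :
    HasDerivAt (eta I M ω p)
      (-p * derivWithin I (Ioc 0 1) (M r) * I (M r) ^ p / ω ^ p) r := by
  have hMr := h.mem_Ioo hr hrL
  have hIr : 0 < I (M r) := h.pos _ (Ioo_subset_Ioc_self hMr)
  have hIderiv : HasDerivAt I (derivWithin I (Ioc 0 1) (M r)) (M r) :=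
    (hI _ (Ioo_subset_Ioc_self hMr)).hasDerivWithinAt.hasDerivAt (Ioc_mem_nhds hMr.1 hMr.2)
  have := ((hIderiv.comp r (h.hasDerivAt hI.continuousOn hr hrL)).div_const ω).rpow_const
    (p := p) (Or.inl (div_pos hIr hω).ne')
  refine this.congr_deriv ?_
  rw [Function.comp_apply, Real.rpow_sub_one (div_pos hIr hω).ne', Real.div_rpow hIr.le hω.le]
  field_simp

theorem convexOn_eta (h : IsProfileInverse I M) (hp : 0 ≤ p) (hω : 0 < ω)
    (hI : DifferentiableOn ℝ I (Ioc 0 1))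
    (hconv : ConvexOn ℝ (Ioc 0 1) fun s ↦ I s ^ (p + 1)) :
    ConvexOn ℝ {r | 0 < r ∧ ENNReal.ofReal r < Lint I} (eta I M ω p) := by
  have hopen : IsOpen {r | 0 < r ∧ ENNReal.ofReal r < Lint I} :=
    isOpen_Ioi.inter (isOpen_setOf_ofReal_lt _)
  have hderiv : ∀ r ∈ {r | 0 < r ∧ ENNReal.ofReal r < Lint I}, HasDerivAt (eta I M ω p)
      (-p * derivWithin I (Ioc 0 1) (M r) * I (M r) ^ p / ω ^ p) r :=
    fun r hr ↦ h.hasDerivAt_eta hI hω hr.1 hr.2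
  have hmono := monotoneOn_derivWithin_mul_rpow_of_convexOn (by linarith) (uniqueDiffOn_Ioc 0 1)
    hI h.pos hconv
  simp only [add_sub_cancel_right] at hmono
  have hconvex : Convex ℝ {r | 0 < r ∧ ENNReal.ofReal r < Lint I} :=
    convex_iff_ordConnected.2 ⟨fun x hx y hy z hz ↦
      ⟨hx.1.trans_le hz.1, (ENNReal.ofReal_le_ofReal hz.2).trans_lt hy.2⟩⟩
  refine MonotoneOn.convexOn_of_deriv hconvex
    (fun r hr ↦ (hderiv r hr).continuousAt.continuousWithinAt) ?_ ?_ <;> rw [hopen.interior_eq]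
  · exact fun r hr ↦ (hderiv r hr).differentiableAt.differentiableWithinAt
  · intro r hr s hs hrs
    rw [(hderiv r hr).deriv, (hderiv s hs).deriv, mul_assoc (-p), mul_assoc (-p)]
    have hMsr : M s ≤ M r := h.antitoneOn ⟨hr.1.le, hr.2⟩ ⟨hs.1.le, hs.2⟩ hrs
    have hG := hmono (Ioo_subset_Ioc_self (h.mem_Ioo hs.1 hs.2))
      (Ioo_subset_Ioc_self (h.mem_Ioo hr.1 hr.2)) hMsr
    exact div_le_div_of_nonneg_right (mul_le_mul_of_nonpos_left hG (neg_nonpos.2 hp))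
      (Real.rpow_nonneg hω.le p)

theorem hasDerivWithinAt_eta_zero (h : IsProfileInverse I M) (hω : 0 < ω)
    (hI : ContDiffOn ℝ 1 I (Ioc 0 1)) :
    HasDerivWithinAt (eta I M ω p)
      (-p * derivWithin I (Ioc 0 1) 1 * I 1 ^ p / ω ^ p) (Ici 0) 0 := by
  have h1 : (1:ℝ) ∈ Ioc 0 1 := right_mem_Ioc.2 one_pos
  have hI1 : I 1 ≠ 0 := (h.pos 1 h1).ne'
  have hS : {r | 0 < r ∧ ENNReal.ofReal r < Lint I} ∈ 𝓝[>] 0 :=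
    inter_mem_nhdsWithin _ ((isOpen_setOf_ofReal_lt _).mem_nhds h.ofReal_zero_lt_Lint)
  have hderiv : ∀ r ∈ {r | 0 < r ∧ ENNReal.ofReal r < Lint I}, HasDerivAt (eta I M ω p)
      (-p * derivWithin I (Ioc 0 1) (M r) * I (M r) ^ p / ω ^ p) r :=
    fun r hr ↦ h.hasDerivAt_eta (hI.differentiableOn one_ne_zero) hω hr.1 hr.2
  have hIcont : ContinuousWithinAt I (Ioc 0 1) 1 := hI.continuousOn 1 h1
  have hI'cont : ContinuousWithinAt (derivWithin I (Ioc 0 1)) (Ioc 0 1) 1 :=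
    hI.continuousOn_derivWithin (uniqueDiffOn_Ioc 0 1) le_rfl 1 h1
  have hlim : Tendsto (eta I M ω p) (𝓝[>] 0) (𝓝 (eta I M ω p 0)) := by
    rw [eta, h.apply_zero]
    exact ((hIcont.div_const ω).rpow_const (Or.inl (div_ne_zero hI1 hω.ne'))).tendsto.comp
      h.tendsto_nhdsGT_zero
  refine hasDerivWithinAt_Ici_of_tendsto_deriv
    (fun r hr ↦ (hderiv r hr).differentiableAt.differentiableWithinAt)
    (hlim.mono_left (nhdsWithin_mono _ fun r hr ↦ hr.1)) hS ?_
  have hderiv_cont : ContinuousWithinAt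
      (fun y ↦ -p * derivWithin I (Ioc 0 1) y * I y ^ p / ω ^ p) (Ioc 0 1) 1 :=
    ((continuousWithinAt_const.mul hI'cont).mul (hIcont.rpow_const (Or.inl hI1))).div_const _
  refine (hderiv_cont.tendsto.comp h.tendsto_nhdsGT_zero).congr' ?_
  exact eventually_of_mem hS fun r hr ↦ (hderiv r hr).deriv.symm

end IsProfileInverse

/-- convexity and derivative formulas for
`η(r) = (I(M(r))/ω_{n-1})^{1/(n-1)}` on `(0,L)`, together with the finite
right derivative of `η` at `0`. -/
theorem eta_convex_and_deriv (n : ℕ) (hn : 2 ≤ n) (I : ℝ → ℝ)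
    (hImono : MonotoneOn I (Set.Ioc (0:ℝ) 1))
    (hIpos : ∀ t ∈ Set.Ioc (0:ℝ) 1, 0 < I t)
    (hIC1 : ContDiffOn ℝ 1 I (Set.Ioc (0:ℝ) 1))
    (hIconv : ConvexOn ℝ (Set.Ioc (0:ℝ) 1)
      (fun s => I s ^ ((n : ℝ) / ((n : ℝ) - 1))))
    (M : ℝ → ℝ)
    (hM : ∀ t : ℝ, 0 ≤ t → ENNReal.ofReal t < Lint I →
      M t ∈ Set.Ioc (0:ℝ) 1 ∧ ∫ r in (M t)..1, 1 / I r = t) :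
    ConvexOn ℝ {r : ℝ | 0 < r ∧ ENNReal.ofReal r < Lint I}
      (fun r => (I (M r) / omegaBall (n - 1)) ^ (1 / ((n : ℝ) - 1))) ∧
    (∀ r : ℝ, 0 < r → ENNReal.ofReal r < Lint I →
      HasDerivAt (fun r => (I (M r) / omegaBall (n - 1)) ^ (1 / ((n : ℝ) - 1)))
        (-(1 / ((n : ℝ) - 1)) * derivWithin I (Set.Ioc (0:ℝ) 1) (M r) *
            I (M r) ^ (1 / ((n : ℝ) - 1)) / omegaBall (n - 1) ^ (1 / ((n : ℝ) - 1))) r) ∧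
    HasDerivWithinAt (fun r => (I (M r) / omegaBall (n - 1)) ^ (1 / ((n : ℝ) - 1)))
      (-(1 / ((n : ℝ) - 1)) * omegaBall (n - 1) ^ (-(1 / ((n : ℝ) - 1))) *
          derivWithin I (Set.Ioc (0:ℝ) 1) 1 * I 1 ^ (1 / ((n : ℝ) - 1)))
      (Set.Ici (0:ℝ)) 0 := by
  have hn1 : (0:ℝ) < n - 1 := by
    have : (2:ℝ) ≤ n := by exact_mod_cast hn
    linarith
  have hexp : (n : ℝ) / ((n : ℝ) - 1) = 1 / ((n : ℝ) - 1) + 1 := by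
    field_simp
    ring
  have h : IsProfileInverse I M := ⟨hImono, hIpos, hM⟩
  have hω := omegaBall_pos (n - 1)
  have hI := hIC1.differentiableOn one_ne_zero
  rw [hexp] at hIconv
  refine ⟨h.convexOn_eta (by positivity) hω hI hIconv,
    fun r hr hrL ↦ h.hasDerivAt_eta hI hω hr hrL, ?_⟩
  refine (h.hasDerivWithinAt_eta_zero hω hIC1).congr_deriv ?_
  rw [Real.rpow_neg hω.le]
  ring
end

section
/- Let n ∈ ℕ, n ≥ 2. Let I : (0,1] → (0,∞) be continuous and nondecreasing, L = ∫_0^1 dr/I(r) ∈ (0,∞], M as determined by ∫_{M(t)}^1 dr/I(r) = t, and η(r) = (I(M(r))/ω_{n−1})^{1/(n−1)}. Define Ω_I = {x = (x', x_n) ∈ ℝ^{n−1} × ℝ : 0 < x_n < L, |x'| < η(x_n)}. Then for every t ∈ [0, L), the n-dimensional Lebesgue measure of {x ∈ Ω_I : x_n > t} equals M(t); in particular, the Lebesgue measure of Ω_I equals 1. -/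
/-! The slice of `Ω_I` at height `s` is a ball of volume `I (M s)`, so by Fubini the layer above
`t` has measure `∫_t^L I (M s) ds`. Substituting `s = ∫_x^1 dr / I r` for `x ∈ (0, M t)`, a map
with derivative `-1 / I x` that `M` inverts, turns the integrand into `1`, and the integral is
`M t`. Monotonicity of `I` makes the slice radius antitone in `s`, which gives measurability. -/

open MeasureTheory ENNReal NNReal

open Set Metric

section Solids

variable {E : Type*} [NormedAddCommGroup E] [MeasurableSpace E]

theorem addHaar_ball_rpow_div_finrank [NormedSpace ℝ E] [BorelSpace E] [FiniteDimensional ℝ E]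
    [Nontrivial E] (μ : Measure E) [μ.IsAddHaarMeasure] {v : ℝ} (hv : 0 ≤ v) :
    μ (ball 0 ((v / (μ (ball 0 1)).toReal) ^ (1 / (Module.finrank ℝ E : ℝ))))
      = ENNReal.ofReal v := by
  have hfin : μ (ball (0 : E) 1) ≠ ⊤ := measure_ball_lt_top.ne
  have hω : 0 < (μ (ball (0 : E) 1)).toReal :=
    ENNReal.toReal_pos (measure_ball_pos μ 0 one_pos).ne' hfin
  have hbase : 0 ≤ v / (μ (ball (0 : E) 1)).toReal := div_nonneg hv hω.le
  rw [Measure.addHaar_ball μ 0 (Real.rpow_nonneg hbase _), one_div,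
    Real.rpow_inv_natCast_pow hbase Module.finrank_pos.ne', ← ENNReal.ofReal_toReal hfin,
    ENNReal.toReal_ofReal hω.le, ← ENNReal.ofReal_mul hbase, div_mul_cancel₀ _ hω.ne']

theorem measurableSet_setOf_norm_lt_of_antitoneOn [OpensMeasurableSpace E] {S : Set ℝ}
    (hS : S.OrdConnected) {r : ℝ → ℝ} (hr : AntitoneOn r S) :
    MeasurableSet {p : E × ℝ | p.2 ∈ S ∧ ‖p.1‖ < r p.2} := by
  have hunion : {p : E × ℝ | p.2 ∈ S ∧ ‖p.1‖ < r p.2}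
      = ⋃ q : ℚ, ball (0 : E) q ×ˢ {s | s ∈ S ∧ (q : ℝ) ≤ r s} := by
    ext p
    simp only [mem_ofPred_eq, mem_iUnion, mem_prod, mem_ball_zero_iff]
    constructor
    · rintro ⟨hpS, hpr⟩
      obtain ⟨q, hq1, hq2⟩ := exists_rat_btwn hpr
      exact ⟨q, hq1, hpS, hq2.le⟩
    · rintro ⟨q, hq, hpS, hqr⟩
      exact ⟨hpS, hq.trans_le hqr⟩
  have hconn : ∀ c : ℝ, OrdConnected {s | s ∈ S ∧ c ≤ r s} := fun c =>
    ⟨fun _ hx _ hy _ hs => ⟨hS.out hx.1 hy.1 hs, hy.2.trans (hr (hS.out hx.1 hy.1 hs) hy.1 hs.2)⟩⟩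
  rw [hunion]
  exact .iUnion fun q => measurableSet_ball.prod (hconn q).measurableSet

theorem prod_setOf_norm_lt_eq_setLIntegral (μ : Measure E) [SFinite μ] (ν : Measure ℝ)
    [SFinite ν] {S : Set ℝ} (hS : MeasurableSet S) {r : ℝ → ℝ}
    (hmeas : MeasurableSet {p : E × ℝ | p.2 ∈ S ∧ ‖p.1‖ < r p.2}) :
    μ.prod ν {p : E × ℝ | p.2 ∈ S ∧ ‖p.1‖ < r p.2} = ∫⁻ s in S, μ (ball 0 (r s)) ∂ν := by
  rw [Measure.prod_apply_symm hmeas, ← lintegral_indicator hS]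
  congr 1
  funext s
  by_cases hs : s ∈ S
  · simp [hs, ball, dist_eq_norm]
  · simp [hs]

end Solids

noncomputable def tailIntegral (I : ℝ → ℝ) (x : ℝ) : ℝ :=
  ∫ r in x..1, 1 / I r

section TailIntegral

variable {I : ℝ → ℝ}

theorem intervalIntegrable_one_div_of_mem_Ioc (hIc : ContinuousOn I (Ioc 0 1))
    (hIpos : ∀ r ∈ Ioc (0 : ℝ) 1, 0 < I r) {a b : ℝ} (ha : a ∈ Ioc (0 : ℝ) 1)
    (hb : b ∈ Ioc (0 : ℝ) 1) : IntervalIntegrable (fun r => 1 / I r) volume a b :=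
  ((continuousOn_const.div hIc fun r hr => (hIpos r hr).ne').mono
    (ordConnected_Ioc.uIcc_subset ha hb)).intervalIntegrable

theorem tailIntegral_sub_tailIntegral (hIc : ContinuousOn I (Ioc 0 1))
    (hIpos : ∀ r ∈ Ioc (0 : ℝ) 1, 0 < I r) {a b : ℝ} (ha : a ∈ Ioc (0 : ℝ) 1)
    (hb : b ∈ Ioc (0 : ℝ) 1) : tailIntegral I a - tailIntegral I b = ∫ r in a..b, 1 / I r := by
  have hb1 : (1 : ℝ) ∈ Ioc (0 : ℝ) 1 := right_mem_Ioc.2 one_pos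
  rw [tailIntegral, tailIntegral, ← intervalIntegral.integral_add_adjacent_intervals
    (intervalIntegrable_one_div_of_mem_Ioc hIc hIpos ha hb)
    (intervalIntegrable_one_div_of_mem_Ioc hIc hIpos hb hb1), add_sub_cancel_right]

theorem tailIntegral_strictAntiOn (hIc : ContinuousOn I (Ioc 0 1))
    (hIpos : ∀ r ∈ Ioc (0 : ℝ) 1, 0 < I r) : StrictAntiOn (tailIntegral I) (Ioc 0 1) := by
  intro a ha b hb hab
  have hpos : 0 < ∫ r in a..b, 1 / I r :=
    intervalIntegral.intervalIntegral_pos_of_pos_on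
      (intervalIntegrable_one_div_of_mem_Ioc hIc hIpos ha hb)
      (fun r hr => one_div_pos.2 (hIpos r ⟨ha.1.trans hr.1, hr.2.le.trans hb.2⟩)) hab
  linarith [tailIntegral_sub_tailIntegral hIc hIpos ha hb]

theorem tailIntegral_nonneg (hIc : ContinuousOn I (Ioc 0 1))
    (hIpos : ∀ r ∈ Ioc (0 : ℝ) 1, 0 < I r) {x : ℝ} (hx : x ∈ Ioc (0 : ℝ) 1) :
    0 ≤ tailIntegral I x := by
  simpa [tailIntegral] using
    (tailIntegral_strictAntiOn hIc hIpos).antitoneOn hx (right_mem_Ioc.2 one_pos) hx.2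

theorem hasDerivAt_tailIntegral (hIc : ContinuousOn I (Ioc 0 1))
    (hIpos : ∀ r ∈ Ioc (0 : ℝ) 1, 0 < I r) {x : ℝ} (hx : x ∈ Ioo (0 : ℝ) 1) :
    HasDerivAt (tailIntegral I) (-(1 / I x)) x := by
  have hc : ContinuousOn (fun r => 1 / I r) (Ioo 0 1) :=
    (continuousOn_const.div hIc fun r hr => (hIpos r hr).ne').mono Ioo_subset_Ioc_self
  have hnhds : Ioo (0 : ℝ) 1 ∈ nhds x := isOpen_Ioo.mem_nhds hx
  have hFTC : HasDerivAt (fun u => ∫ r in (1 : ℝ)..u, 1 / I r) (1 / I x) x :=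
    intervalIntegral.integral_hasDerivAt_right
      (intervalIntegrable_one_div_of_mem_Ioc hIc hIpos (right_mem_Ioc.2 one_pos)
        (Ioo_subset_Ioc_self hx))
      ⟨_, hnhds, hc.aestronglyMeasurable measurableSet_Ioo⟩ (hc.continuousAt hnhds)
  have hsymm : tailIntegral I = fun u => -∫ r in (1 : ℝ)..u, 1 / I r :=
    funext fun u => intervalIntegral.integral_symm _ _
  exact hsymm ▸ hFTC.neg

theorem ofReal_tailIntegral (hIc : ContinuousOn I (Ioc 0 1))
    (hIpos : ∀ r ∈ Ioc (0 : ℝ) 1, 0 < I r) {x : ℝ} (hx : x ∈ Ioc (0 : ℝ) 1) :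
    ENNReal.ofReal (tailIntegral I x) = ∫⁻ r in Ioo x 1, ENNReal.ofReal (1 / I r) := by
  have hint := intervalIntegrable_one_div_of_mem_Ioc hIc hIpos hx (right_mem_Ioc.2 one_pos)
  have hnonneg : 0 ≤ᵐ[volume.restrict (Ioc x 1)] fun r => 1 / I r :=
    (ae_restrict_iff' measurableSet_Ioc).2 (.of_forall fun r hr =>
      (one_div_pos.2 (hIpos r ⟨hx.1.trans hr.1, hr.2⟩)).le)
  rw [tailIntegral, intervalIntegral.integral_of_le hx.2,
    ofReal_integral_eq_lintegral_ofReal hint.1 hnonneg, setLIntegral_congr Ioo_ae_eq_Ioc]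

theorem ofReal_tailIntegral_lt_Lint (hIc : ContinuousOn I (Ioc 0 1))
    (hIpos : ∀ r ∈ Ioc (0 : ℝ) 1, 0 < I r) {x : ℝ} (hx : x ∈ Ioo (0 : ℝ) 1) :
    ENNReal.ofReal (tailIntegral I x) < Lint I := by
  have hy : x / 2 ∈ Ioc (0 : ℝ) 1 := ⟨by linarith [hx.1], by linarith [hx.2]⟩
  have hlt : tailIntegral I x < tailIntegral I (x / 2) :=
    tailIntegral_strictAntiOn hIc hIpos hy (Ioo_subset_Ioc_self hx) (by linarith [hx.1])
  calc ENNReal.ofReal (tailIntegral I x) < ENNReal.ofReal (tailIntegral I (x / 2)) :=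
        (ENNReal.ofReal_lt_ofReal_iff_of_nonneg
          (tailIntegral_nonneg hIc hIpos (Ioo_subset_Ioc_self hx))).2 hlt
    _ = ∫⁻ r in Ioo (x / 2) 1, ENNReal.ofReal (1 / I r) := ofReal_tailIntegral hIc hIpos hy
    _ ≤ Lint I := lintegral_mono_set (Ioo_subset_Ioo_left hy.1.le)

theorem Lint_pos_s7 (hIc : ContinuousOn I (Ioc 0 1))
    (hIpos : ∀ r ∈ Ioc (0 : ℝ) 1, 0 < I r) : 0 < Lint I :=
  (zero_le).trans_lt (ofReal_tailIntegral_lt_Lint hIc hIpos ⟨one_half_pos, one_half_lt_one⟩)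

end TailIntegral

theorem ordConnected_setOf_lt_and_ofReal_lt (t : ℝ) (L : ℝ≥0∞) :
    OrdConnected {s : ℝ | t < s ∧ ENNReal.ofReal s < L} :=
  ⟨fun _ hx _ hy _ hz => ⟨hx.1.trans_le hz.1, (ENNReal.ofReal_le_ofReal hz.2).trans_lt hy.2⟩⟩

def IsTailIntegralInverse (I M : ℝ → ℝ) : Prop :=
  ∀ t : ℝ, 0 ≤ t → ENNReal.ofReal t < Lint I → M t ∈ Ioc (0 : ℝ) 1 ∧ tailIntegral I (M t) = t

namespace IsTailIntegralInverse

variable {I M : ℝ → ℝ}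

theorem apply_tailIntegral (hM : IsTailIntegralInverse I M) (hIc : ContinuousOn I (Ioc 0 1))
    (hIpos : ∀ r ∈ Ioc (0 : ℝ) 1, 0 < I r) {x : ℝ} (hx : x ∈ Ioo (0 : ℝ) 1) :
    M (tailIntegral I x) = x := by
  obtain ⟨hmem, heq⟩ := hM _ (tailIntegral_nonneg hIc hIpos (Ioo_subset_Ioc_self hx))
    (ofReal_tailIntegral_lt_Lint hIc hIpos hx)
  exact (tailIntegral_strictAntiOn hIc hIpos).injOn hmem (Ioo_subset_Ioc_self hx) heq

theorem apply_zero (hM : IsTailIntegralInverse I M) (hIc : ContinuousOn I (Ioc 0 1))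
    (hIpos : ∀ r ∈ Ioc (0 : ℝ) 1, 0 < I r) : M 0 = 1 := by
  obtain ⟨hmem, heq⟩ := hM 0 le_rfl (by simpa using Lint_pos_s7 hIc hIpos)
  refine (tailIntegral_strictAntiOn hIc hIpos).injOn hmem (right_mem_Ioc.2 one_pos) ?_
  simpa [tailIntegral] using heq

theorem lt_of_lt (hM : IsTailIntegralInverse I M) (hIc : ContinuousOn I (Ioc 0 1))
    (hIpos : ∀ r ∈ Ioc (0 : ℝ) 1, 0 < I r) {s t : ℝ} (ht : 0 ≤ t) (hts : t < s)
    (hs : ENNReal.ofReal s < Lint I) : M s < M t := by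
  obtain ⟨hMs, hFs⟩ := hM s (ht.trans hts.le) hs
  obtain ⟨hMt, hFt⟩ := hM t ht ((ENNReal.ofReal_le_ofReal hts.le).trans_lt hs)
  exact ((tailIntegral_strictAntiOn hIc hIpos).lt_iff_gt hMt hMs).1 (by rwa [hFt, hFs])

theorem image_tailIntegral_Ioo (hM : IsTailIntegralInverse I M)
    (hIc : ContinuousOn I (Ioc 0 1)) (hIpos : ∀ r ∈ Ioc (0 : ℝ) 1, 0 < I r) {t : ℝ}
    (ht : 0 ≤ t) (htL : ENNReal.ofReal t < Lint I) :
    tailIntegral I '' Ioo 0 (M t) = {s : ℝ | t < s ∧ ENNReal.ofReal s < Lint I} := by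
  obtain ⟨hMt, hFt⟩ := hM t ht htL
  ext s
  constructor
  · rintro ⟨x, hx, rfl⟩
    have hx1 : x ∈ Ioo (0 : ℝ) 1 := ⟨hx.1, hx.2.trans_le hMt.2⟩
    exact ⟨hFt ▸ tailIntegral_strictAntiOn hIc hIpos (Ioo_subset_Ioc_self hx1) hMt hx.2,
      ofReal_tailIntegral_lt_Lint hIc hIpos hx1⟩
  · rintro ⟨hts, hsL⟩
    exact ⟨M s, ⟨(hM s (ht.trans hts.le) hsL).1.1, hM.lt_of_lt hIc hIpos ht hts hsL⟩,
      (hM s (ht.trans hts.le) hsL).2⟩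

theorem antitoneOn_comp (hM : IsTailIntegralInverse I M)
    (hIc : ContinuousOn I (Ioc 0 1)) (hImono : MonotoneOn I (Ioc 0 1))
    (hIpos : ∀ r ∈ Ioc (0 : ℝ) 1, 0 < I r) :
    AntitoneOn (fun s => I (M s)) {s : ℝ | 0 ≤ s ∧ ENNReal.ofReal s < Lint I} := by
  intro s hs u hu hsu
  refine hImono (hM u hu.1 hu.2).1 (hM s hs.1 hs.2).1 ?_
  rcases hsu.eq_or_lt with rfl | hlt
  · exact le_rfl
  · exact (hM.lt_of_lt hIc hIpos hs.1 hlt hu.2).le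

/-- The substitution `s = tailIntegral I x` turns `I (M s) ds` into `dx`. -/
theorem setLIntegral_comp_eq (hM : IsTailIntegralInverse I M)
    (hIc : ContinuousOn I (Ioc 0 1)) (hIpos : ∀ r ∈ Ioc (0 : ℝ) 1, 0 < I r) {t : ℝ}
    (ht : 0 ≤ t) (htL : ENNReal.ofReal t < Lint I) :
    ∫⁻ s in {s : ℝ | t < s ∧ ENNReal.ofReal s < Lint I}, ENNReal.ofReal (I (M s))
      = ENNReal.ofReal (M t) := by
  have hsub : Ioo 0 (M t) ⊆ Ioo (0 : ℝ) 1 := Ioo_subset_Ioo_right (hM t ht htL).1.2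
  have hone : ∀ x ∈ Ioo 0 (M t),
      ENNReal.ofReal |-(1 / I x)| * ENNReal.ofReal (I (M (tailIntegral I x))) = 1 := by
    intro x hx
    have hIx : 0 < I x := hIpos x (Ioo_subset_Ioc_self (hsub hx))
    rw [hM.apply_tailIntegral hIc hIpos (hsub hx), abs_neg, abs_of_pos (one_div_pos.2 hIx),
      ← ENNReal.ofReal_mul (one_div_pos.2 hIx).le, one_div_mul_cancel hIx.ne', ENNReal.ofReal_one]
  rw [← hM.image_tailIntegral_Ioo hIc hIpos ht htL,
    lintegral_image_eq_lintegral_abs_deriv_mul measurableSet_Ioo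
      (fun x hx => (hasDerivAt_tailIntegral hIc hIpos (hsub hx)).hasDerivWithinAt)
      ((tailIntegral_strictAntiOn hIc hIpos).injOn.mono (hsub.trans Ioo_subset_Ioc_self)),
    setLIntegral_congr_fun measurableSet_Ioo hone, setLIntegral_one, Real.volume_Ioo, sub_zero]

theorem volume_layer (hM : IsTailIntegralInverse I M)
    {n : ℕ} (hn : 2 ≤ n) (hIc : ContinuousOn I (Ioc 0 1)) (hImono : MonotoneOn I (Ioc 0 1))
    (hIpos : ∀ r ∈ Ioc (0 : ℝ) 1, 0 < I r) {t : ℝ} (ht : 0 ≤ t)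
    (htL : ENNReal.ofReal t < Lint I) :
    volume {p : EuclideanSpace ℝ (Fin (n - 1)) × ℝ |
        p.2 ∈ {s : ℝ | t < s ∧ ENNReal.ofReal s < Lint I} ∧
          ‖p.1‖ < (I (M p.2) / omegaBall (n - 1)) ^ (1 / ((n : ℝ) - 1))}
      = ENNReal.ofReal (M t) := by
  have : NeZero (n - 1) := ⟨by omega⟩
  have hdim :
      1 / ((n : ℝ) - 1) = 1 / (Module.finrank ℝ (EuclideanSpace ℝ (Fin (n - 1))) : ℝ) := by
    rw [finrank_euclideanSpace_fin, Nat.cast_sub (by omega : 1 ≤ n), Nat.cast_one]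
  have hS := ordConnected_setOf_lt_and_ofReal_lt t (Lint I)
  have hmem : ∀ s ∈ {s : ℝ | t < s ∧ ENNReal.ofReal s < Lint I}, M s ∈ Ioc (0 : ℝ) 1 :=
    fun s hs => (hM s (ht.trans hs.1.le) hs.2).1
  have hω : 0 < omegaBall (n - 1) := ENNReal.toReal_pos (measure_ball_pos volume 0 one_pos).ne'
    measure_ball_lt_top.ne
  have hanti : AntitoneOn (fun s => (I (M s) / omegaBall (n - 1)) ^ (1 / ((n : ℝ) - 1)))
      {s : ℝ | t < s ∧ ENNReal.ofReal s < Lint I} := fun s hs u hu hsu =>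
    Real.rpow_le_rpow (div_nonneg (hIpos _ (hmem u hu)).le hω.le)
      (div_le_div_of_nonneg_right (hM.antitoneOn_comp hIc hImono hIpos
        ⟨ht.trans hs.1.le, hs.2⟩ ⟨ht.trans hu.1.le, hu.2⟩ hsu) hω.le)
      (by rw [hdim]; positivity)
  have hslice : ∀ s ∈ {s : ℝ | t < s ∧ ENNReal.ofReal s < Lint I},
      volume (ball (0 : EuclideanSpace ℝ (Fin (n - 1)))
        ((I (M s) / omegaBall (n - 1)) ^ (1 / ((n : ℝ) - 1)))) = ENNReal.ofReal (I (M s)) :=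
    fun s hs => hdim ▸ addHaar_ball_rpow_div_finrank volume (hIpos _ (hmem s hs)).le
  rw [Measure.volume_eq_prod, prod_setOf_norm_lt_eq_setLIntegral _ _ hS.measurableSet
      (measurableSet_setOf_norm_lt_of_antitoneOn hS hanti),
    setLIntegral_congr_fun hS.measurableSet hslice]
  exact hM.setLIntegral_comp_eq hIc hIpos ht htL

end IsTailIntegralInverse

/-- the layers `{x ∈ Ω_I : x_n > t}` of the domain
`Ω_I = {(x',x_n) : 0 < x_n < L, |x'| < η(x_n)}` have measure `M(t)`;
in particular `|Ω_I| = 1`. -/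
theorem measure_of_layers_of_OmegaI (n : ℕ) (hn : 2 ≤ n) (I : ℝ → ℝ)
    (hIc : ContinuousOn I (Set.Ioc (0:ℝ) 1))
    (hImono : MonotoneOn I (Set.Ioc (0:ℝ) 1))
    (hIpos : ∀ t ∈ Set.Ioc (0:ℝ) 1, 0 < I t)
    (M : ℝ → ℝ)
    (hM : ∀ t : ℝ, 0 ≤ t → ENNReal.ofReal t < Lint I →
      M t ∈ Set.Ioc (0:ℝ) 1 ∧ ∫ r in (M t)..1, 1 / I r = t) :
    (∀ t : ℝ, 0 ≤ t → ENNReal.ofReal t < Lint I →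
      volume {p : EuclideanSpace ℝ (Fin (n - 1)) × ℝ |
          (0 < p.2 ∧ ENNReal.ofReal p.2 < Lint I ∧
            ‖p.1‖ < (I (M p.2) / omegaBall (n - 1)) ^ (1 / ((n : ℝ) - 1))) ∧ t < p.2}
        = ENNReal.ofReal (M t)) ∧
    volume {p : EuclideanSpace ℝ (Fin (n - 1)) × ℝ |
        0 < p.2 ∧ ENNReal.ofReal p.2 < Lint I ∧
          ‖p.1‖ < (I (M p.2) / omegaBall (n - 1)) ^ (1 / ((n : ℝ) - 1))} = 1 := by
  have hM' : IsTailIntegralInverse I M := hM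
  refine ⟨fun t ht htL => ?_, ?_⟩
  · rw [← hM'.volume_layer hn hIc hImono hIpos ht htL]
    congr 1
    ext p
    simp only [mem_ofPred_eq]
    constructor
    · rintro ⟨⟨-, hpL, hpr⟩, htp⟩
      exact ⟨⟨htp, hpL⟩, hpr⟩
    · rintro ⟨⟨htp, hpL⟩, hpr⟩
      exact ⟨⟨ht.trans_lt htp, hpL, hpr⟩, htp⟩
  · have h0L : ENNReal.ofReal 0 < Lint I := by simpa using Lint_pos_s7 hIc hIpos
    have hΩ := hM'.volume_layer hn hIc hImono hIpos le_rfl h0L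
    rw [hM'.apply_zero hIc hIpos, ENNReal.ofReal_one] at hΩ
    rw [← hΩ]
    congr 1
    ext p
    simp only [mem_ofPred_eq, and_assoc]
end

section
/- Let n ∈ ℕ, n ≥ 2. Let I : (0,1] → (0,∞) be continuous and nondecreasing, L = ∫_0^1 dr/I(r), M determined by ∫_{M(t)}^1 dr/I(r) = t, η(r) = (I(M(r))/ω_{n−1})^{1/(n−1)}, and Ω_I = {(x', x_n) ∈ ℝ^{n−1} × ℝ : 0 < x_n < L, |x'| < η(x_n)}. Let h : (0,1) → [0,∞) be measurable and define F : Ω_I → [0,∞) by F(x) = h(M(x_n)). Then for every λ > 0, the n-dimensional Lebesgue measure of {x ∈ Ω_I : F(x) > λ} equals the one-dimensional Lebesgue measure of {t ∈ (0,1) : h(t) > λ}; that is, F and h are equimeasurable. -/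
/-!
`G(s) = ∫_s^1 dr / I(r)` is a strictly decreasing bijection from `(0,1)` onto `(0,L)` with
inverse `M`, and `G' = -1/I`. The horizontal slice of `Ω_I` at height `t` is a ball of
`(n-1)`-volume `I(M t)`, so by Tonelli `|{F > λ}| = ∫_{t : h(M t) > λ} I(M t) dt`. Substituting
`t = G(s)`, the Jacobian `1/I(s)` cancels the slice volume `I(s)`, which leaves
`|{s ∈ (0,1) : h(s) > λ}|`. Continuity of `M`, the inverse of a strictly monotone map between
open sets, is needed only for measurability.
-/

open MeasureTheory ENNReal NNReal

open Set Filter Topology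

theorem StrictAntiOn.continuousOn_of_isOpen_image {α β : Type*} [LinearOrder α]
    [TopologicalSpace α] [OrderTopology α] [LinearOrder β] [TopologicalSpace β] [OrderTopology β]
    [DenselyOrdered β] {f : α → β} {s : Set α} (hf : StrictAntiOn f s) (hs : IsOpen s)
    (hfs : IsOpen (f '' s)) : ContinuousOn f s := fun _ ht =>
  (hf.dual_right.continuousAt_of_image_mem_nhds (hs.mem_nhds ht)
    (hfs.mem_nhds (mem_image_of_mem f ht))).continuousWithinAt

theorem ContinuousOn.measurableSet_inter_preimage {α γ : Type*} [TopologicalSpace α]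
    [MeasurableSpace α] [OpensMeasurableSpace α] [TopologicalSpace γ] [MeasurableSpace γ]
    [BorelSpace γ] {f : α → γ} {s : Set α} {t : Set γ} (hf : ContinuousOn f s)
    (hs : MeasurableSet s) (ht : MeasurableSet t) : MeasurableSet (s ∩ f ⁻¹' t) := by
  have := hs.subtype_image (hf.domRestrict.measurable ht)
  rwa [domRestrict_eq, preimage_comp, Subtype.image_preimage_coe] at this

section PositiveOnIoc

variable {f : ℝ → ℝ} {a b : ℝ}

theorem ContinuousOn.intervalIntegrable_of_mem_Ioc (hf : ContinuousOn f (Ioc a b)) {x y : ℝ}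
    (hx : x ∈ Ioc a b) (hy : y ∈ Ioc a b) : IntervalIntegrable f volume x y :=
  (hf.mono (ordConnected_Ioc.uIcc_subset hx hy)).intervalIntegrable

theorem hasDerivAt_intervalIntegral_of_mem_Ioo (hf : ContinuousOn f (Ioc a b)) {s : ℝ}
    (hs : s ∈ Ioo a b) : HasDerivAt (fun s => ∫ r in s..b, f r) (-f s) s :=
  intervalIntegral.integral_hasDerivAt_left
    (hf.intervalIntegrable_of_mem_Ioc (Ioo_subset_Ioc_self hs) ⟨hs.1.trans hs.2, le_rfl⟩)
    ((hf.mono Ioo_subset_Ioc_self).stronglyMeasurableAtFilter isOpen_Ioo s hs)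
    (hf.continuousAt (Ioc_mem_nhds hs.1 hs.2))

variable (hf : ContinuousOn f (Ioc a b)) (hpos : ∀ x ∈ Ioc a b, 0 < f x)
include hf hpos

theorem strictAntiOn_intervalIntegral_of_pos :
    StrictAntiOn (fun s => ∫ r in s..b, f r) (Ioc a b) := by
  intro x hx y hy hxy
  have hb : b ∈ Ioc a b := ⟨hy.1.trans_le hy.2, le_rfl⟩
  have hxy_pos : 0 < ∫ r in x..y, f r :=
    intervalIntegral.intervalIntegral_pos_of_pos_on (hf.intervalIntegrable_of_mem_Ioc hx hy)
      (fun r hr => hpos r ⟨hx.1.trans hr.1, hr.2.le.trans hy.2⟩) hxy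
  have hsplit := intervalIntegral.integral_add_adjacent_intervals
    (hf.intervalIntegrable_of_mem_Ioc hx hy) (hf.intervalIntegrable_of_mem_Ioc hy hb)
  dsimp only
  linarith

theorem ofReal_intervalIntegral_eq_setLIntegral {x y : ℝ} (hx : x ∈ Ioc a b) (hy : y ∈ Ioc a b)
    (hxy : x ≤ y) :
    ENNReal.ofReal (∫ r in x..y, f r) = ∫⁻ r in Ioo x y, ENNReal.ofReal (f r) := by
  rw [intervalIntegral.integral_of_le hxy, integral_Ioc_eq_integral_Ioo]
  exact ofReal_integral_eq_lintegral_ofReal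
    ((hf.intervalIntegrable_of_mem_Ioc hx hy).1.mono_set Ioo_subset_Ioc_self)
    (ae_restrict_of_forall_mem measurableSet_Ioo
      fun r hr => (hpos r ⟨hx.1.trans hr.1, hr.2.le.trans hy.2⟩).le)

theorem ofReal_intervalIntegral_lt_setLIntegral {s : ℝ} (hs : s ∈ Ioo a b) :
    ENNReal.ofReal (∫ r in s..b, f r) < ∫⁻ r in Ioo a b, ENNReal.ofReal (f r) := by
  obtain ⟨x, hax, hxs⟩ := exists_between hs.1
  have hx : x ∈ Ioc a b := ⟨hax, (hxs.trans hs.2).le⟩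
  have hb : b ∈ Ioc a b := ⟨hs.1.trans hs.2, le_rfl⟩
  have hanti := strictAntiOn_intervalIntegral_of_pos hf hpos
  have hx_pos : 0 < ∫ r in x..b, f r := by
    simpa using hanti hx hb (hxs.trans hs.2)
  calc ENNReal.ofReal (∫ r in s..b, f r) < ENNReal.ofReal (∫ r in x..b, f r) :=
        ENNReal.ofReal_lt_ofReal_iff'.2 ⟨hanti hx (Ioo_subset_Ioc_self hs) hxs, hx_pos⟩
    _ = ∫⁻ r in Ioo x b, ENNReal.ofReal (f r) :=
        ofReal_intervalIntegral_eq_setLIntegral hf hpos hx hb (hxs.trans hs.2).le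
    _ ≤ ∫⁻ r in Ioo a b, ENNReal.ofReal (f r) := lintegral_mono_set (Ioo_subset_Ioo_left hax.le)

end PositiveOnIoc

theorem prod_setOf_norm_lt_eq_setLIntegral_s8 {E : Type*} [NormedAddCommGroup E] [NormedSpace ℝ E]
    [MeasurableSpace E] [BorelSpace E] [FiniteDimensional ℝ E] (μ : Measure E)
    [μ.IsAddHaarMeasure] (ν : Measure ℝ) [SFinite ν] {U D : Set ℝ} {ρ : ℝ → ℝ}
    (hU : IsOpen U) (hρ : ContinuousOn ρ U) (hD : MeasurableSet D) (hDU : D ⊆ U)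
    (hρ_pos : ∀ t ∈ D, 0 < ρ t) :
    μ.prod ν {p : E × ℝ | p.2 ∈ D ∧ ‖p.1‖ < ρ p.2}
      = ∫⁻ t in D, ENNReal.ofReal (ρ t ^ Module.finrank ℝ E) * μ (Metric.ball 0 1) ∂ν := by
  have hopen : IsOpen ((univ ×ˢ U) ∩ (fun p : E × ℝ => ‖p.1‖ - ρ p.2) ⁻¹' Iio 0) :=
    (continuous_fst.norm.continuousOn.sub (hρ.comp continuous_snd.continuousOn
      fun p hp => hp.2)).isOpen_inter_preimage (isOpen_univ.prod hU) isOpen_Iio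
  have hmeas : MeasurableSet {p : E × ℝ | p.2 ∈ D ∧ ‖p.1‖ < ρ p.2} := by
    convert (measurable_snd hD).inter hopen.measurableSet using 1
    ext p
    simp only [mem_ofPred_eq, mem_inter_iff, mem_preimage, mem_prod, mem_univ, true_and,
      mem_Iio, sub_neg]
    exact ⟨fun h => ⟨h.1, hDU h.1, h.2⟩, fun h => ⟨h.1, h.2.2⟩⟩
  rw [Measure.prod_apply_symm hmeas, ← lintegral_indicator hD]
  refine lintegral_congr fun t => ?_
  by_cases ht : t ∈ D
  · have hball : (fun x : E => (x, t)) ⁻¹' {p : E × ℝ | p.2 ∈ D ∧ ‖p.1‖ < ρ p.2}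
        = Metric.ball 0 (ρ t) := by
      ext x
      simp [ht]
    rw [indicator_of_mem ht, hball, Measure.addHaar_ball_of_pos μ 0 (hρ_pos t ht)]
  · have hempty : (fun x : E => (x, t)) ⁻¹' {p : E × ℝ | p.2 ∈ D ∧ ‖p.1‖ < ρ p.2} = ∅ := by
      ext x
      simp [ht]
    rw [indicator_of_notMem ht, hempty, measure_empty]

theorem lintegral_image_inv_abs_deriv_eq_volume {s : Set ℝ} {G G' M : ℝ → ℝ}
    (hs : MeasurableSet s) (hG' : ∀ x ∈ s, HasDerivWithinAt G (G' x) s x) (hG : InjOn G s)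
    (hG'_ne : ∀ x ∈ s, G' x ≠ 0) (hMG : LeftInvOn M G s) :
    ∫⁻ t in G '' s, ENNReal.ofReal |G' (M t)|⁻¹ = volume s := by
  rw [lintegral_image_eq_lintegral_abs_deriv_mul hs hG' hG, ← setLIntegral_one]
  refine setLIntegral_congr_fun hs fun x hx => ?_
  rw [hMG hx, ← ENNReal.ofReal_mul (abs_nonneg _),
    mul_inv_cancel₀ (abs_ne_zero.2 (hG'_ne x hx)), ENNReal.ofReal_one]

/-- The range `(0, L)` of the height `x_n` on `Ω_I`; here `L = Lint I` may be `∞`. -/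
def heightInterval (I : ℝ → ℝ) : Set ℝ := {t | 0 < t ∧ ENNReal.ofReal t < Lint I}

theorem isOpen_heightInterval (I : ℝ → ℝ) : IsOpen (heightInterval I) :=
  isOpen_Ioi.inter (ENNReal.continuous_ofReal.isOpen_preimage _ isOpen_Iio)

section Profile

variable {I M : ℝ → ℝ} (hIc : ContinuousOn I (Ioc 0 1)) (hIpos : ∀ t ∈ Ioc (0 : ℝ) 1, 0 < I t)
  (hM : ∀ t : ℝ, 0 ≤ t → ENNReal.ofReal t < Lint I →
    M t ∈ Ioc (0 : ℝ) 1 ∧ ∫ r in (M t)..1, 1 / I r = t)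

include hIc hIpos

theorem continuousOn_one_div_of_pos : ContinuousOn (fun r => 1 / I r) (Ioc 0 1) :=
  continuousOn_const.div hIc fun r hr => (hIpos r hr).ne'

theorem strictAntiOn_intervalIntegral_one_div :
    StrictAntiOn (fun s => ∫ r in s..1, 1 / I r) (Ioc 0 1) :=
  strictAntiOn_intervalIntegral_of_pos (continuousOn_one_div_of_pos hIc hIpos)
    fun r hr => one_div_pos.2 (hIpos r hr)

theorem mapsTo_heightInterval :
    MapsTo (fun s => ∫ r in s..1, 1 / I r) (Ioo 0 1) (heightInterval I) := by
  intro s hs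
  refine ⟨?_, ofReal_intervalIntegral_lt_setLIntegral (continuousOn_one_div_of_pos hIc hIpos)
    (fun r hr => one_div_pos.2 (hIpos r hr)) hs⟩
  simpa using strictAntiOn_intervalIntegral_one_div hIc hIpos (Ioo_subset_Ioc_self hs)
    ⟨zero_lt_one, le_rfl⟩ hs.2

omit hIc hIpos in
include hM in
theorem mapsTo_Ioo_of_intervalIntegral_eq : MapsTo M (heightInterval I) (Ioo 0 1) := by
  intro t ht
  obtain ⟨hMt, hint⟩ := hM t ht.1.le ht.2
  refine ⟨hMt.1, hMt.2.lt_of_ne fun h => ht.1.ne' ?_⟩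
  rw [← hint, h, intervalIntegral.integral_same]

include hM in
theorem invOn_of_intervalIntegral_eq :
    InvOn M (fun s => ∫ r in s..1, 1 / I r) (Ioo 0 1) (heightInterval I) := by
  have hright : RightInvOn M (fun s => ∫ r in s..1, 1 / I r) (heightInterval I) :=
    fun t ht => (hM t ht.1.le ht.2).2
  refine ⟨fun s hs => ?_, hright⟩
  have hGs := mapsTo_heightInterval hIc hIpos hs
  exact (strictAntiOn_intervalIntegral_one_div hIc hIpos).injOn
    (Ioo_subset_Ioc_self (mapsTo_Ioo_of_intervalIntegral_eq hM hGs)) (Ioo_subset_Ioc_self hs)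
    (hright hGs)

include hM in
theorem continuousOn_of_intervalIntegral_eq : ContinuousOn M (heightInterval I) := by
  have hinv := invOn_of_intervalIntegral_eq hIc hIpos hM
  have hMS := mapsTo_Ioo_of_intervalIntegral_eq hM
  have hG := strictAntiOn_intervalIntegral_one_div hIc hIpos
  have hanti : StrictAntiOn M (heightInterval I) := fun t ht t' ht' htt' =>
    (hG.lt_iff_gt (Ioo_subset_Ioc_self (hMS ht)) (Ioo_subset_Ioc_self (hMS ht'))).1 <| by
      simpa only [(hM t ht.1.le ht.2).2, (hM t' ht'.1.le ht'.2).2] using htt'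
  refine hanti.continuousOn_of_isOpen_image (isOpen_heightInterval I) ?_
  rw [(hinv.symm.bijOn hMS (mapsTo_heightInterval hIc hIpos)).image_eq]
  exact isOpen_Ioo

include hM in
theorem measurableSet_heightInterval_inter_preimage {T : Set ℝ} (hT : MeasurableSet T) :
    MeasurableSet (heightInterval I ∩ M ⁻¹' T) :=
  (continuousOn_of_intervalIntegral_eq hIc hIpos hM).measurableSet_inter_preimage
    (isOpen_heightInterval I).measurableSet hT

include hM in
theorem setLIntegral_heightInterval_inter_preimage {T : Set ℝ} (hT : MeasurableSet T) :
    ∫⁻ t in heightInterval I ∩ M ⁻¹' T, ENNReal.ofReal (I (M t)) = volume (Ioo 0 1 ∩ T) := by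
  have hinv := invOn_of_intervalIntegral_eq hIc hIpos hM
  have hlevel :
      heightInterval I ∩ M ⁻¹' T = (fun s => ∫ r in s..1, 1 / I r) '' (Ioo 0 1 ∩ T) := by
    rw [inter_comm (Ioo 0 1), hinv.1.image_inter', inter_comm, (hinv.bijOn
      (mapsTo_heightInterval hIc hIpos) (mapsTo_Ioo_of_intervalIntegral_eq hM)).image_eq]
  calc _ = ∫⁻ t in heightInterval I ∩ M ⁻¹' T, ENNReal.ofReal |-(1 / I (M t))|⁻¹ := by
        refine setLIntegral_congr_fun (measurableSet_heightInterval_inter_preimage hIc hIpos hM hT)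
          fun t ht => ?_
        rw [abs_neg, abs_of_pos (one_div_pos.2 (hIpos _ (Ioo_subset_Ioc_self
          (mapsTo_Ioo_of_intervalIntegral_eq hM ht.1)))), one_div, inv_inv]
    _ = volume (Ioo 0 1 ∩ T) := by
        rw [hlevel]
        exact lintegral_image_inv_abs_deriv_eq_volume (G' := fun s => -(1 / I s))
          (measurableSet_Ioo.inter hT)
          (fun s hs => (hasDerivAt_intervalIntegral_of_mem_Ioo
            (continuousOn_one_div_of_pos hIc hIpos) hs.1).hasDerivWithinAt)
          ((strictAntiOn_intervalIntegral_one_div hIc hIpos).injOn.mono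
            (inter_subset_left.trans Ioo_subset_Ioc_self))
          (fun s hs => neg_ne_zero.2 (one_div_pos.2 (hIpos s (Ioo_subset_Ioc_self hs.1))).ne')
          (hinv.1.mono inter_subset_left)

end Profile

theorem ofReal_rpow_pow_mul_volume_ball {d : ℕ} (hd : d ≠ 0) {c : ℝ} (hc : 0 ≤ c) :
    ENNReal.ofReal (((c / omegaBall d) ^ (1 / (d : ℝ))) ^ d)
      * volume (Metric.ball (0 : EuclideanSpace ℝ (Fin d)) 1) = ENNReal.ofReal c := by
  have hω := omegaBall_pos d
  rw [← Real.rpow_natCast, ← Real.rpow_mul (div_nonneg hc hω.le),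
    one_div_mul_cancel (Nat.cast_ne_zero.2 hd), Real.rpow_one,
    ← ENNReal.ofReal_toReal (measure_ball_lt_top (μ := volume)).ne, ← omegaBall,
    ← ENNReal.ofReal_mul (div_nonneg hc hω.le), div_mul_cancel₀ c hω.ne']

theorem equimeasurability_on_OmegaI_general (n : ℕ) (hn : 2 ≤ n) (I : ℝ → ℝ)
    (hIc : ContinuousOn I (Set.Ioc (0:ℝ) 1))
    (hIpos : ∀ t ∈ Set.Ioc (0:ℝ) 1, 0 < I t)
    (M : ℝ → ℝ)
    (hM : ∀ t : ℝ, 0 ≤ t → ENNReal.ofReal t < Lint I →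
      M t ∈ Set.Ioc (0:ℝ) 1 ∧ ∫ r in (M t)..1, 1 / I r = t)
    (h : ℝ → ℝ) (hmeas : Measurable h) :
    ∀ lam : ℝ, 0 < lam →
      volume {p : EuclideanSpace ℝ (Fin (n - 1)) × ℝ |
          (0 < p.2 ∧ ENNReal.ofReal p.2 < Lint I ∧
            ‖p.1‖ < (I (M p.2) / omegaBall (n - 1)) ^ (1 / ((n : ℝ) - 1))) ∧
          lam < h (M p.2)}
        = volume {t ∈ Set.Ioo (0:ℝ) 1 | lam < h t} := by
  intro lam _
  set ρ := fun t => (I (M t) / omegaBall (n - 1)) ^ (1 / ((n - 1 : ℕ) : ℝ))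
  have hregion : {p : EuclideanSpace ℝ (Fin (n - 1)) × ℝ |
      (0 < p.2 ∧ ENNReal.ofReal p.2 < Lint I ∧
        ‖p.1‖ < (I (M p.2) / omegaBall (n - 1)) ^ (1 / ((n : ℝ) - 1))) ∧ lam < h (M p.2)}
      = {p | p.2 ∈ heightInterval I ∩ M ⁻¹' {v | lam < h v} ∧ ‖p.1‖ < ρ p.2} := by
    ext p
    simp only [mem_ofPred_eq, mem_inter_iff, mem_preimage, heightInterval, ρ,
      Nat.cast_sub (by omega : 1 ≤ n), Nat.cast_one]
    tauto
  have hMS := mapsTo_Ioo_of_intervalIntegral_eq hM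
  have hIM_pos : ∀ t ∈ heightInterval I, 0 < I (M t) :=
    fun t ht => hIpos _ (Ioo_subset_Ioc_self (hMS ht))
  have hρ : ContinuousOn ρ (heightInterval I) :=
    ((hIc.comp (continuousOn_of_intervalIntegral_eq hIc hIpos hM)
      fun t ht => Ioo_subset_Ioc_self (hMS ht)).div_const _).rpow_const
      fun _ _ => Or.inr (by positivity)
  have hT : MeasurableSet {v | lam < h v} := measurableSet_lt measurable_const hmeas
  have hlevel := measurableSet_heightInterval_inter_preimage hIc hIpos hM hT
  rw [hregion, Measure.volume_eq_prod, prod_setOf_norm_lt_eq_setLIntegral_s8 volume volume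
      (isOpen_heightInterval I) hρ hlevel inter_subset_left
      fun t ht => Real.rpow_pos_of_pos (div_pos (hIM_pos t ht.1) (omegaBall_pos _)) _]
  refine (setLIntegral_congr_fun hlevel fun t ht => ?_).trans
    (setLIntegral_heightInterval_inter_preimage hIc hIpos hM hT)
  rw [finrank_euclideanSpace_fin, ofReal_rpow_pow_mul_volume_ball (by omega) (hIM_pos t ht.1).le]

/-- the function `F(x) = h(M(x_n))` on `Ω_I` is equimeasurable
with `h` on `(0,1)`. -/
theorem equimeasurability_on_OmegaI (n : ℕ) (hn : 2 ≤ n) (I : ℝ → ℝ)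
    (hIc : ContinuousOn I (Set.Ioc (0:ℝ) 1))
    (hImono : MonotoneOn I (Set.Ioc (0:ℝ) 1))
    (hIpos : ∀ t ∈ Set.Ioc (0:ℝ) 1, 0 < I t)
    (M : ℝ → ℝ)
    (hM : ∀ t : ℝ, 0 ≤ t → ENNReal.ofReal t < Lint I →
      M t ∈ Set.Ioc (0:ℝ) 1 ∧ ∫ r in (M t)..1, 1 / I r = t)
    (h : ℝ → ℝ) (hmeas : Measurable h) (hnonneg : ∀ t ∈ Set.Ioo (0:ℝ) 1, 0 ≤ h t) :
    ∀ lam : ℝ, 0 < lam →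
      volume {p : EuclideanSpace ℝ (Fin (n - 1)) × ℝ |
          (0 < p.2 ∧ ENNReal.ofReal p.2 < Lint I ∧
            ‖p.1‖ < (I (M p.2) / omegaBall (n - 1)) ^ (1 / ((n : ℝ) - 1))) ∧
          lam < h (M p.2)}
        = volume {t ∈ Set.Ioo (0:ℝ) 1 | lam < h t} :=
  equimeasurability_on_OmegaI_general n hn I hIc hIpos M hM h hmeas
end

section
/- Let (Ω, μ) be a measure space with 0 < μ(Ω) < ∞. Let Z be a set of measurable real-valued functions on Ω that is closed under pointwise multiplication, equipped with a functional ‖·‖_Z : Z → [0,∞), and suppose there exist constants C > 0 and C' > 0 such that ‖uv‖_Z ≤ C ‖u‖_Z ‖v‖_Z for all u, v ∈ Z, and λ · μ({x ∈ Ω : |u(x)| > λ}) ≤ C' ‖u‖_Z for every u ∈ Z and every λ > 0. Then every u ∈ Z is essentially bounded, with ess sup_{Ω} |u| ≤ 2C ‖u‖_Z. -/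
/-! Powers of `u` stay in `Z`, with `nrm (u ^ n) ≤ C ^ (n - 1) * nrm u ^ n`, and
`{t < |u|} ⊆ {t ^ n < |u ^ n|}`. The weak-L¹ bound applied to `u ^ n` therefore gives
`μ {t < |u|} ≤ (C' / C) * (C * nrm u / t) ^ n`, which tends to `0` for every `t > C * nrm u`.
So in fact `|u| ≤ C * nrm u` almost everywhere. -/

open MeasureTheory

open Filter Topology ENNReal in
theorem ENNReal.eq_zero_of_forall_ofReal_pow_mul_le {m : ℝ≥0∞} {A s t : ℝ} (hs : 0 ≤ s)
    (hst : s < t)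
    (h : ∀ᶠ n : ℕ in atTop, ENNReal.ofReal (t ^ n) * m ≤ ENNReal.ofReal (A * s ^ n)) :
    m = 0 := by
  have ht : 0 < t := hs.trans_lt hst
  have hbound : ∀ᶠ n : ℕ in atTop, m ≤ ENNReal.ofReal (A * (s / t) ^ n) := by
    filter_upwards [h] with n hn
    have htn : 0 < t ^ n := pow_pos ht n
    rw [div_pow, ← mul_div_assoc, ENNReal.ofReal_div_of_pos htn,
      ENNReal.le_div_iff_mul_le (by simp [htn]) (by simp), mul_comm]
    exact hn
  have hlim : Tendsto (fun n : ℕ => ENNReal.ofReal (A * (s / t) ^ n)) atTop (𝓝 0) := by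
    rw [← ENNReal.ofReal_zero, ← mul_zero A]
    have hgeom : Tendsto (fun n : ℕ => (s / t) ^ n) atTop (𝓝 0) :=
      _root_.tendsto_pow_atTop_nhds_zero_of_lt_one (div_nonneg hs ht.le) ((div_lt_one ht).2 hst)
    exact ENNReal.tendsto_ofReal (hgeom.const_mul A)
  exact nonpos_iff_eq_zero.1 (ge_of_tendsto hlim hbound)

theorem MeasureTheory.ae_le_of_forall_lt_ae_le {Ω : Type*} [MeasurableSpace Ω] {μ : Measure Ω}
    {f : Ω → ℝ} {c : ℝ} (h : ∀ t, c < t → ∀ᵐ x ∂μ, f x ≤ t) :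
    ∀ᵐ x ∂μ, f x ≤ c := by
  have hseq : ∀ᵐ x ∂μ, ∀ n : ℕ, f x ≤ c + 1 / (n + 1) :=
    ae_all_iff.2 fun n => h _ (lt_add_of_pos_right c Nat.one_div_pos_of_nat)
  filter_upwards [hseq] with x hx
  simpa using ge_of_tendsto' (tendsto_const_nhds.add tendsto_one_div_add_atTop_nhds_zero_nat) hx

section PowerBounds

variable {Ω : Type*} {Z : Set (Ω → ℝ)} {nrm : (Ω → ℝ) → ℝ} {C : ℝ} {u : Ω → ℝ}

theorem pow_succ_mem_of_mul_mem (hZmul : ∀ u ∈ Z, ∀ v ∈ Z, (fun x => u x * v x) ∈ Z)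
    (hu : u ∈ Z) (n : ℕ) : (fun x => u x ^ (n + 1)) ∈ Z := by
  induction n with
  | zero => simpa using hu
  | succ n ih => simpa only [pow_succ] using hZmul _ ih u hu

theorem nrm_pow_succ_le (hZmul : ∀ u ∈ Z, ∀ v ∈ Z, (fun x => u x * v x) ∈ Z)
    (hsubmult : ∀ u ∈ Z, ∀ v ∈ Z, nrm (fun x => u x * v x) ≤ C * nrm u * nrm v)
    (hC : 0 ≤ C) (hnrm : 0 ≤ nrm u) (hu : u ∈ Z) (n : ℕ) :
    nrm (fun x => u x ^ (n + 1)) ≤ C ^ n * nrm u ^ (n + 1) := by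
  induction n with
  | zero => simp
  | succ n ih =>
    calc nrm (fun x => u x ^ (n + 1 + 1))
        = nrm (fun x => u x ^ (n + 1) * u x) := by simp only [pow_succ]
      _ ≤ C * nrm (fun x => u x ^ (n + 1)) * nrm u :=
        hsubmult _ (pow_succ_mem_of_mul_mem hZmul hu n) u hu
      _ ≤ C * (C ^ n * nrm u ^ (n + 1)) * nrm u := by gcongr
      _ = C ^ (n + 1) * nrm u ^ (n + 1 + 1) := by ring

end PowerBounds

open Filter in
theorem MeasureTheory.ae_abs_le_mul_nrm {Ω : Type*} [MeasurableSpace Ω] {μ : Measure Ω}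
    {Z : Set (Ω → ℝ)} {nrm : (Ω → ℝ) → ℝ} {C C' : ℝ} {u : Ω → ℝ}
    (hZmul : ∀ u ∈ Z, ∀ v ∈ Z, (fun x => u x * v x) ∈ Z)
    (hsubmult : ∀ u ∈ Z, ∀ v ∈ Z, nrm (fun x => u x * v x) ≤ C * nrm u * nrm v)
    (hC : 0 < C) (hC' : 0 ≤ C') (hnrm : 0 ≤ nrm u)
    (hweak : ∀ u ∈ Z, ∀ lam : ℝ, 0 < lam →
      ENNReal.ofReal lam * μ {x | lam < |u x|} ≤ ENNReal.ofReal (C' * nrm u))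
    (hu : u ∈ Z) : ∀ᵐ x ∂μ, |u x| ≤ C * nrm u := by
  refine ae_le_of_forall_lt_ae_le fun t ht => ?_
  have hs : 0 ≤ C * nrm u := mul_nonneg hC.le hnrm
  have ht0 : 0 < t := hs.trans_lt ht
  simp only [ae_iff, not_le]
  refine ENNReal.eq_zero_of_forall_ofReal_pow_mul_le (A := C' / C) hs ht
    (eventually_atTop.2 ⟨1, fun n hn => ?_⟩)
  obtain ⟨k, rfl⟩ : ∃ k, n = k + 1 := Nat.exists_eq_add_of_le' hn
  have hlevel : {x | t < |u x|} ⊆ {x | t ^ (k + 1) < |u x ^ (k + 1)|} :=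
    fun x (hx : t < |u x|) => show t ^ (k + 1) < |u x ^ (k + 1)| by
      rw [abs_pow]; exact pow_lt_pow_left₀ hx ht0.le k.succ_ne_zero
  calc ENNReal.ofReal (t ^ (k + 1)) * μ {x | t < |u x|}
      ≤ ENNReal.ofReal (t ^ (k + 1)) * μ {x | t ^ (k + 1) < |u x ^ (k + 1)|} := by
        gcongr
    _ ≤ ENNReal.ofReal (C' * nrm (fun x => u x ^ (k + 1))) :=
        hweak _ (pow_succ_mem_of_mul_mem hZmul hu k) _ (by positivity)
    _ ≤ ENNReal.ofReal (C' * (C ^ k * nrm u ^ (k + 1))) := by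
        gcongr
        exact nrm_pow_succ_le hZmul hsubmult hC.le hnrm hu k
    _ = ENNReal.ofReal (C' / C * (C * nrm u) ^ (k + 1)) := by
        congr 1
        field_simp
        ring

theorem banach_algebra_embeds_into_Linfty_general
    {Ω : Type*} [MeasurableSpace Ω] (μ : Measure Ω)
    (Z : Set (Ω → ℝ))
    (hZmul : ∀ u ∈ Z, ∀ v ∈ Z, (fun x => u x * v x) ∈ Z)
    (nrm : (Ω → ℝ) → ℝ) (hnrm_nonneg : ∀ u ∈ Z, 0 ≤ nrm u)
    (C C' : ℝ) (hC : 0 < C) (hC' : 0 < C')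
    (hsubmult : ∀ u ∈ Z, ∀ v ∈ Z, nrm (fun x => u x * v x) ≤ C * nrm u * nrm v)
    (hweak : ∀ u ∈ Z, ∀ lam : ℝ, 0 < lam →
      ENNReal.ofReal lam * μ {x | lam < |u x|} ≤ ENNReal.ofReal (C' * nrm u)) :
    ∀ u ∈ Z, ∀ᵐ x ∂μ, |u x| ≤ 2 * C * nrm u := by
  intro u hu
  have hnrm := hnrm_nonneg u hu
  filter_upwards [ae_abs_le_mul_nrm hZmul hsubmult hC hC'.le hnrm hweak hu] with x hx
  nlinarith

/-- a multiplicatively closed class of functions, normed so that products are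
controlled and embedded into weak-L¹, embeds into L^∞, with `ess sup |u| ≤ 2C‖u‖_Z`. -/
theorem banach_algebra_embeds_into_Linfty
    {Ω : Type*} [MeasurableSpace Ω] (μ : Measure Ω)
    (hμpos : 0 < μ Set.univ) (hμfin : μ Set.univ < ⊤)
    (Z : Set (Ω → ℝ)) (hZmeas : ∀ u ∈ Z, Measurable u)
    (hZmul : ∀ u ∈ Z, ∀ v ∈ Z, (fun x => u x * v x) ∈ Z)
    (nrm : (Ω → ℝ) → ℝ) (hnrm_nonneg : ∀ u ∈ Z, 0 ≤ nrm u)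
    (C C' : ℝ) (hC : 0 < C) (hC' : 0 < C')
    (hsubmult : ∀ u ∈ Z, ∀ v ∈ Z, nrm (fun x => u x * v x) ≤ C * nrm u * nrm v)
    (hweak : ∀ u ∈ Z, ∀ lam : ℝ, 0 < lam →
      ENNReal.ofReal lam * μ {x | lam < |u x|} ≤ ENNReal.ofReal (C' * nrm u)) :
    ∀ u ∈ Z, ∀ᵐ x ∂μ, |u x| ≤ 2 * C * nrm u :=
  banach_algebra_embeds_into_Linfty_general μ Z hZmul nrm hnrm_nonneg C C' hC hC' hsubmult hweak
end

section
/- Let I be a positive nondecreasing function on (0,1), let m ∈ ℕ, m ≥ 1, and let g be a nonnegative measurable function on (0,1). Then, with values in [0,∞], H_I^m g(t) = (1/(m−1)!) ∫_t^1 (g(s)/I(s)) (∫_t^s dr/I(r))^{m−1} ds for every t ∈ (0,1). -/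
open MeasureTheory ENNReal NNReal

/-!
With `W = 1/I`, the operator `H_I` is `g ↦ ∫_t^1 g W`. By Tonelli over the triangle
`t < r < s < 1`, one more application of `H_I` to the kernel formula reduces to the identity
`(n + 1) ∫_t^s W(r) (∫_r^s W)^n dr = (∫_t^s W)^(n+1)`, which is proved by induction on `n`
from Tonelli again and `∫_t^x W + ∫_x^s W = ∫_t^s W`. All integrals live in `[0,∞]`, so no
integrability is involved. Monotonicity of `I` makes `W` antitone on `(0,1)`, hence equal
there to an antitone, so measurable, function on `ℝ`.
-/

open Set Function

noncomputable def weightedHardy (b : ℝ) (W g : ℝ → ℝ≥0∞) : ℝ → ℝ≥0∞ :=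
  fun t => ∫⁻ r in Ioo t b, g r * W r

theorem HI_eq_weightedHardy (I : ℝ → ℝ) :
    HI I = weightedHardy 1 fun r => (ENNReal.ofReal (I r))⁻¹ := by
  ext g t
  simp only [HI, weightedHardy, div_eq_mul_inv]

theorem weightedHardy_iterate_eqOn {a b : ℝ} {W W' : ℝ → ℝ≥0∞} (h : EqOn W W' (Ioo a b))
    (g : ℝ → ℝ≥0∞) (n : ℕ) :
    EqOn ((weightedHardy b W)^[n] g) ((weightedHardy b W')^[n] g) (Ioo a b) := by
  induction n with
  | zero => exact fun _ _ => rfl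
  | succ n ih =>
    intro t ht
    simp only [iterate_succ_apply']
    refine setLIntegral_congr_fun measurableSet_Ioo fun r hr => ?_
    have hr' : r ∈ Ioo a b := ⟨ht.1.trans hr.1, hr.2⟩
    simp only [ih hr', h hr']

theorem lintegral_Ioo_lintegral_Ioo_swap {k : ℝ → ℝ → ℝ≥0∞} (hk : Measurable (uncurry k))
    (a b : ℝ) :
    ∫⁻ r in Ioo a b, ∫⁻ x in Ioo r b, k r x = ∫⁻ x in Ioo a b, ∫⁻ r in Ioo a x, k r x := by
  let f : ℝ → ℝ → ℝ≥0∞ := fun r x => {p : ℝ × ℝ | p.1 < p.2}.indicator (uncurry k) (r, x)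
  have hf : Measurable (uncurry f) := hk.indicator (measurableSet_lt measurable_fst measurable_snd)
  calc ∫⁻ r in Ioo a b, ∫⁻ x in Ioo r b, k r x
      = ∫⁻ r in Ioo a b, ∫⁻ x in Ioo a b, f r x := by
        refine setLIntegral_congr_fun measurableSet_Ioo fun r hr => ?_
        have : Ioi r ∩ Ioo a b = Ioo r b := by
          rw [Ioi_inter_Ioo, max_eq_left hr.1.le]
        rw [← this, ← Measure.restrict_restrict measurableSet_Ioi,
          ← lintegral_indicator measurableSet_Ioi]
        rfl
    _ = ∫⁻ x in Ioo a b, ∫⁻ r in Ioo a b, f r x := lintegral_lintegral_swap hf.aemeasurable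
    _ = ∫⁻ x in Ioo a b, ∫⁻ r in Ioo a x, k r x := by
        refine setLIntegral_congr_fun measurableSet_Ioo fun x hx => ?_
        have : Iio x ∩ Ioo a b = Ioo a x := by
          rw [Iio_inter_Ioo, min_eq_left hx.2.le]
        rw [← this, ← Measure.restrict_restrict measurableSet_Iio,
          ← lintegral_indicator measurableSet_Iio]
        rfl

theorem lintegral_Ioo_add_lintegral_Ioo (W : ℝ → ℝ≥0∞) {a x b : ℝ} (hax : a < x) (hxb : x ≤ b) :
    (∫⁻ r in Ioo a x, W r) + ∫⁻ r in Ioo x b, W r = ∫⁻ r in Ioo a b, W r := by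
  have hdisj : Disjoint (Ioo a x) (Ico x b) := Ico_disjoint_Ico_same.mono_left Ioo_subset_Ico_self
  calc (∫⁻ r in Ioo a x, W r) + ∫⁻ r in Ioo x b, W r
      = (∫⁻ r in Ioo a x, W r) + ∫⁻ r in Ico x b, W r := by
        rw [setLIntegral_congr (Ioo_ae_eq_Ico (a := x))]
    _ = ∫⁻ r in Ioo a b, W r := by
      rw [← lintegral_union measurableSet_Ico hdisj, Ioo_union_Ico_eq_Ioo hax hxb]

theorem measurable_lintegral_Ioo {W : ℝ → ℝ≥0∞} (hW : Measurable W) :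
    Measurable fun p : ℝ × ℝ => ∫⁻ x in Ioo p.1 p.2, W x := by
  simp_rw [← lintegral_indicator measurableSet_Ioo]
  refine Measurable.lintegral_prod_right (f := fun (p : ℝ × ℝ) x => (Ioo p.1 p.2).indicator W x) ?_
  have hset : MeasurableSet {q : (ℝ × ℝ) × ℝ | q.1.1 < q.2 ∧ q.2 < q.1.2} :=
    (measurableSet_lt (measurable_fst.comp measurable_fst) measurable_snd).inter
      (measurableSet_lt measurable_snd (measurable_snd.comp measurable_fst))
  exact (hW.comp measurable_snd).indicator hset

/-- The integrated form of `d(F^(n+1)) = -(n+1) W F^n dr` for `F(r) = ∫_r^b W`. -/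
theorem succ_mul_lintegral_mul_pow_lintegral_Ioo {W : ℝ → ℝ≥0∞} (hW : Measurable W) (b : ℝ)
    (n : ℕ) (a : ℝ) :
    (n + 1 : ℝ≥0∞) * ∫⁻ r in Ioo a b, W r * (∫⁻ x in Ioo r b, W x) ^ n
      = (∫⁻ r in Ioo a b, W r) ^ (n + 1) := by
  induction n generalizing a with
  | zero => simp
  | succ n ih =>
    set F : ℝ → ℝ≥0∞ := fun r => ∫⁻ x in Ioo r b, W x
    have hF : Measurable F :=
      Antitone.measurable fun r r' h => lintegral_mono_set (Ioo_subset_Ioo_left h)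
    have hG : Measurable fun x => ∫⁻ r in Ioo a x, W r :=
      Monotone.measurable fun x x' h => lintegral_mono_set (Ioo_subset_Ioo_right h)
    have hWF : Measurable fun x => W x * F x ^ n := by fun_prop
    set T := ∫⁻ r in Ioo a b, W r * F r ^ (n + 1)
    have hT : T = (n + 1) * ∫⁻ x in Ioo a b, (∫⁻ r in Ioo a x, W r) * (W x * F x ^ n) := by
      calc T = ∫⁻ r in Ioo a b, ∫⁻ x in Ioo r b, (n + 1) * (W r * (W x * F x ^ n)) := by
            refine setLIntegral_congr_fun measurableSet_Ioo fun r _ => ?_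
            rw [lintegral_const_mul' _ _ (by simp), lintegral_const_mul _ hWF, ← mul_assoc,
              mul_comm _ (W r), mul_assoc, ih, pow_succ', mul_comm]
        _ = ∫⁻ x in Ioo a b, ∫⁻ r in Ioo a x, (n + 1) * (W r * (W x * F x ^ n)) :=
            lintegral_Ioo_lintegral_Ioo_swap (by fun_prop) a b
        _ = _ := by
            rw [← lintegral_const_mul' _ _ (by simp)]
            refine setLIntegral_congr_fun measurableSet_Ioo fun x _ => ?_
            rw [lintegral_const_mul' _ _ (by simp), lintegral_mul_const _ hW]
    have hsplit : (∫⁻ x in Ioo a b, (∫⁻ r in Ioo a x, W r) * (W x * F x ^ n)) + T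
        = F a * ∫⁻ x in Ioo a b, W x * F x ^ n := by
      rw [← lintegral_add_left (by fun_prop), ← lintegral_const_mul _ hWF]
      refine setLIntegral_congr_fun measurableSet_Ioo fun x hx => ?_
      rw [show F a = (∫⁻ r in Ioo a x, W r) + F x from
        (lintegral_Ioo_add_lintegral_Ioo W hx.1 hx.2.le).symm]
      ring
    calc ((n + 1 : ℕ) + 1 : ℝ≥0∞) * T = (n + 1) * T + T := by push_cast; ring
      _ = (n + 1) * ((∫⁻ x in Ioo a b, (∫⁻ r in Ioo a x, W r) * (W x * F x ^ n)) + T) := by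
          nth_rw 2 [hT]; ring
      _ = F a * ((n + 1) * ∫⁻ x in Ioo a b, W x * F x ^ n) := by rw [hsplit]; ring
      _ = F a ^ (n + 1 + 1) := by rw [ih]; ring

theorem factorial_mul_weightedHardy_iterate_succ {W g : ℝ → ℝ≥0∞} (hW : Measurable W)
    (hg : Measurable g) (b : ℝ) (n : ℕ) (t : ℝ) :
    (n.factorial : ℝ≥0∞) * (weightedHardy b W)^[n + 1] g t
      = ∫⁻ s in Ioo t b, g s * W s * (∫⁻ r in Ioo t s, W r) ^ n := by
  induction n generalizing t with
  | zero => simp [weightedHardy]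
  | succ n ih =>
    have hA : Measurable fun p : ℝ × ℝ => ∫⁻ x in Ioo p.1 p.2, W x := measurable_lintegral_Ioo hW
    have hA₁ (s : ℝ) : Measurable fun r => ∫⁻ x in Ioo r s, W x :=
      hA.comp (measurable_id.prodMk measurable_const)
    have hA₂ (r : ℝ) : Measurable fun s => ∫⁻ x in Ioo r s, W x :=
      hA.comp (measurable_const.prodMk measurable_id)
    calc ((n + 1).factorial : ℝ≥0∞) * (weightedHardy b W)^[n + 1 + 1] g t
        = (n + 1) * ∫⁻ r in Ioo t b, (n.factorial * (weightedHardy b W)^[n + 1] g r) * W r := by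
          rw [iterate_succ_apply', Nat.factorial_succ, Nat.cast_mul, mul_assoc]
          push_cast
          congr 1
          rw [weightedHardy, ← lintegral_const_mul' _ _ (by simp)]
          simp only [mul_assoc]
      _ = (n + 1) * ∫⁻ r in Ioo t b, ∫⁻ s in Ioo r b,
            W r * (g s * W s * (∫⁻ x in Ioo r s, W x) ^ n) := by
          congr 1
          refine setLIntegral_congr_fun measurableSet_Ioo fun r _ => ?_
          rw [ih, mul_comm, ← lintegral_const_mul _ (by fun_prop)]
      _ = (n + 1) * ∫⁻ s in Ioo t b, ∫⁻ r in Ioo t s,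
            W r * (g s * W s * (∫⁻ x in Ioo r s, W x) ^ n) := by
          rw [lintegral_Ioo_lintegral_Ioo_swap (by fun_prop)]
      _ = ∫⁻ s in Ioo t b, g s * W s * (∫⁻ r in Ioo t s, W r) ^ (n + 1) := by
          have hn : (n + 1 : ℝ≥0∞) ≠ ∞ := by simp
          rw [← lintegral_const_mul' _ _ hn]
          refine setLIntegral_congr_fun measurableSet_Ioo fun s _ => ?_
          rw [← succ_mul_lintegral_mul_pow_lintegral_Ioo hW s n t, ← lintegral_const_mul' _ _ hn,
            ← lintegral_const_mul' _ _ hn, ← lintegral_const_mul _ (by fun_prop)]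
          exact lintegral_congr fun r => by ring

theorem hardy_iterate_formula_general (I : ℝ → ℝ)
    (hImono : MonotoneOn I (Set.Ioo (0:ℝ) 1))
    (m : ℕ) (hm : 1 ≤ m) (g : ℝ → ℝ≥0∞) (hg : Measurable g) :
    ∀ t ∈ Set.Ioo (0:ℝ) 1,
      (HI I)^[m] g t
        = ((m - 1).factorial : ℝ≥0∞)⁻¹ *
            ∫⁻ s in Set.Ioo t 1,
              (g s / ENNReal.ofReal (I s)) *
                (∫⁻ r in Set.Ioo t s, (ENNReal.ofReal (I r))⁻¹) ^ (m - 1) := by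
  intro t ht
  obtain ⟨n, rfl⟩ := Nat.exists_eq_add_of_le' hm
  have hanti : AntitoneOn (fun r => (ENNReal.ofReal (I r))⁻¹) (Ioo 0 1) :=
    fun r hr r' hr' h => ENNReal.inv_le_inv.2 (ENNReal.ofReal_le_ofReal (hImono hr hr' h))
  obtain ⟨W, hW, hIW⟩ := hanti.exists_antitone_extension (OrderBot.bddBelow _) (OrderTop.bddAbove _)
  have hfact : (n.factorial : ℝ≥0∞) ≠ 0 := by simp [Nat.factorial_ne_zero]
  rw [HI_eq_weightedHardy, weightedHardy_iterate_eqOn hIW g _ ht, Nat.add_sub_cancel,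
    ← ENNReal.inv_mul_cancel_left hfact (natCast_ne_top _) (b := (weightedHardy 1 W)^[n + 1] g t),
    factorial_mul_weightedHardy_iterate_succ hW.measurable hg]
  congr 1
  refine setLIntegral_congr_fun measurableSet_Ioo fun s hs => ?_
  have hts : Ioo t s ⊆ Ioo 0 1 := Ioo_subset_Ioo ht.1.le hs.2.le
  simp only [div_eq_mul_inv, hIW ⟨ht.1.trans hs.1, hs.2⟩,
    setLIntegral_congr_fun measurableSet_Ioo (hIW.mono hts)]

/-- explicit kernel formula for the `m`-fold iterate of `H_I`:
`H_I^m g (t) = (1/(m-1)!) ∫_t^1 (g(s)/I(s)) (∫_t^s dr/I(r))^{m-1} ds`. -/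
theorem hardy_iterate_formula (I : ℝ → ℝ)
    (hIpos : ∀ t ∈ Set.Ioo (0:ℝ) 1, 0 < I t)
    (hImono : MonotoneOn I (Set.Ioo (0:ℝ) 1))
    (m : ℕ) (hm : 1 ≤ m) (g : ℝ → ℝ≥0∞) (hg : Measurable g) :
    ∀ t ∈ Set.Ioo (0:ℝ) 1,
      (HI I)^[m] g t
        = ((m - 1).factorial : ℝ≥0∞)⁻¹ *
            ∫⁻ s in Set.Ioo t 1,
              (g s / ENNReal.ofReal (I s)) *
                (∫⁻ r in Set.Ioo t s, (ENNReal.ofReal (I r))⁻¹) ^ (m - 1) :=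
  hardy_iterate_formula_general I hImono m hm g hg
end
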